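/- arXiv:2512.22786 — 10 statements merged into one kernel-verified Lean document; each statement's English description precedes it below -/
import Mathlib

section
/- Suppose V satisfies the time-barrier dissipation inequality and the structural condition β(1−α) ≥ 1 holds. Then V(t) → 0 as t → T_c from the left. -/
open Set Filter

/-- If `V` satisfies the time-barrier dissipation inequality
`V' ≤ -β·V/(T_c - t) - q·V^α` (whenever `V > 0`) and the structural condition
`β (1 - α) ≥ 1` holds, then `V(t) → 0` as `t → T_c⁻`. -/
theorem time_barrier_lyapunov_tendsto_zero
    (Tc q β α : ℝ) (hTc : 0 < Tc) (hq : 0 < q) (hβ : 0 < β)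
    (hα : α ∈ Set.Ioo (0 : ℝ) 1)
    (V : ℝ → ℝ)
    (hVcont : ContinuousOn V (Set.Ico 0 Tc))
    (hVnonneg : ∀ t ∈ Set.Ico (0 : ℝ) Tc, 0 ≤ V t)
    (hdiss : ∀ t ∈ Set.Ico (0 : ℝ) Tc, 0 < V t →
      ∃ v' : ℝ, HasDerivAt V v' t ∧ v' ≤ -β * V t / (Tc - t) - q * V t ^ α)
    (hcond : β * (1 - α) ≥ 1) :
    Filter.Tendsto V (nhdsWithin Tc (Set.Iio Tc)) (nhds 0) := by
  have hV0 : 0 ≤ V 0 := hVnonneg 0 ⟨le_refl 0, hTc⟩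
  set C : ℝ := (V 0 + 1) / Tc ^ β with hC
  have hTcβ : (0:ℝ) < Tc ^ β := Real.rpow_pos_of_pos hTc β
  have hCpos : 0 < C := div_pos (by linarith) hTcβ
  set B : ℝ → ℝ := fun u => C * (Tc - u) ^ β with hBdef
  -- B is continuous
  have hBcont : Continuous B := by
    apply continuous_const.mul
    rw [continuous_iff_continuousAt]
    intro x
    exact (Real.continuousAt_rpow_const _ _ (Or.inr hβ.le)).comp
      ((continuous_const.sub continuous_id).continuousAt)
  -- B is positive on Iio Tc
  have hBpos : ∀ u < Tc, 0 < B u := fun u hu =>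
    mul_pos hCpos (Real.rpow_pos_of_pos (by linarith) β)
  -- derivative of B
  set B' : ℝ → ℝ := fun x => C * (β * (Tc - x) ^ (β - 1) * (-1)) with hB'def
  have hBderiv : ∀ x < Tc, HasDerivAt B (B' x) x := by
    intro x hx
    have h1 : HasDerivAt (fun u : ℝ => Tc - u) (-1) x := (hasDerivAt_id x).const_sub Tc
    have h2 : HasDerivAt (fun y : ℝ => y ^ β) (β * (Tc - x) ^ (β - 1)) (Tc - x) :=
      Real.hasDerivAt_rpow_const (Or.inl (sub_pos.mpr hx).ne')
    exact (h2.comp x h1).const_mul C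
  -- choice of derivative for V
  set F : ℝ → ℝ := fun x =>
    if h : x ∈ Set.Ico (0:ℝ) Tc ∧ 0 < V x then (hdiss x h.1 h.2).choose else 0 with hFdef
  have hF : ∀ x, ∀ h : x ∈ Set.Ico (0:ℝ) Tc ∧ 0 < V x,
      HasDerivAt V (F x) x ∧ F x ≤ -β * V x / (Tc - x) - q * V x ^ α := by
    intro x h
    simp only [hFdef, dif_pos h]
    exact (hdiss x h.1 h.2).choose_spec
  -- the key bound
  have key : ∀ t ∈ Set.Ico (0:ℝ) Tc, V t ≤ B t := by
    intro t ht
    by_contra hcontra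
    push_neg at hcontra
    have hIcc : Set.Icc (0:ℝ) t ⊆ Set.Ico 0 Tc := fun u hu => ⟨hu.1, lt_of_le_of_lt hu.2 ht.2⟩
    -- the set where V ≤ B
    set S : Set ℝ := Set.Icc 0 t ∩ (fun u => (V u, B u)) ⁻¹' {p : ℝ × ℝ | p.1 ≤ p.2} with hSdef
    have hpaircont : ContinuousOn (fun u => (V u, B u)) (Set.Icc 0 t) :=
      (hVcont.mono hIcc).prodMk hBcont.continuousOn
    have hSclosed : IsClosed S :=
      hpaircont.preimage_isClosed_of_isClosed isClosed_Icc isClosed_le_prod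
    have hB0 : V 0 ≤ B 0 := by
      have : B 0 = V 0 + 1 := by
        simp only [hBdef, sub_zero, hC]
        field_simp
      linarith [this]
    have h0S : (0:ℝ) ∈ S := ⟨⟨le_refl 0, ht.1⟩, hB0⟩
    have hSne : S.Nonempty := ⟨0, h0S⟩
    have hSbdd : BddAbove S := ⟨t, fun u hu => hu.1.2⟩
    set s : ℝ := sSup S with hs
    have hsS : s ∈ S := hSclosed.csSup_mem hSne hSbdd
    have hs0 : 0 ≤ s := hsS.1.1
    have hst : s ≤ t := hsS.1.2
    have hsTc : s < Tc := lt_of_le_of_lt hst ht.2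
    have hVsB : V s ≤ B s := hsS.2
    have hsnet : s ≠ t := by
      intro h; rw [h] at hVsB; exact absurd hVsB (not_le.mpr hcontra)
    have hslt : s < t := lt_of_le_of_ne hst hsnet
    -- on (s, t], V > B
    have hgt : ∀ u ∈ Set.Ioc s t, B u < V u := by
      intro u hu
      by_contra hle
      push_neg at hle
      have : u ∈ S := ⟨⟨le_trans hs0 hu.1.le, hu.2⟩, hle⟩
      exact absurd (le_csSup hSbdd this) (not_le.mpr hu.1)
    -- hence B s ≤ V s by continuity / closedness
    have hBsVs : B s ≤ V s := by
      set S' : Set ℝ := Set.Icc 0 t ∩ (fun u => (B u, V u)) ⁻¹' {p : ℝ × ℝ | p.1 ≤ p.2} with hS'def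
      have hS'closed : IsClosed S' :=
        (hBcont.continuousOn.prodMk (hVcont.mono hIcc)).preimage_isClosed_of_isClosed
          isClosed_Icc isClosed_le_prod
      have hsub : Set.Ioc s t ⊆ S' := fun u hu =>
        ⟨⟨le_trans hs0 hu.1.le, hu.2⟩, (hgt u hu).le⟩
      have : s ∈ closure (Set.Ioc s t) := by
        rw [closure_Ioc hsnet]
        exact ⟨le_refl s, hst⟩
      have : s ∈ S' := hS'closed.closure_subset ((closure_mono hsub) this)
      exact this.2
    have hVseq : V s = B s := le_antisymm hVsB hBsVs
    -- V > 0 on [s, t)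
    have hVpos : ∀ x ∈ Set.Ico s t, 0 < V x := by
      intro x hx
      rcases eq_or_lt_of_le hx.1 with h | h
      · rw [← h, hVseq]; exact hBpos s hsTc
      · exact lt_trans (hBpos x (lt_trans hx.2 ht.2)) (hgt x ⟨h, hx.2.le⟩)
    have hmemIco : ∀ x ∈ Set.Ico s t, x ∈ Set.Ico (0:ℝ) Tc := fun x hx =>
      ⟨le_trans hs0 hx.1, lt_trans hx.2 ht.2⟩
    -- apply the fencing theorem on [s, t]
    have := image_le_of_liminf_slope_right_lt_deriv_boundary'
      (f := V) (f' := F) (a := s) (b := t)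
      (hVcont.mono (fun u hu => ⟨le_trans hs0 hu.1, lt_of_le_of_lt hu.2 ht.2⟩))
      (by
        intro x hx r hr
        have hd := (hF x ⟨hmemIco x hx, hVpos x hx⟩).1
        exact (hd.hasDerivWithinAt (s := Set.Ici x)).liminf_right_slope_le hr)
      (le_of_eq hVseq) hBcont.continuousOn
      (fun x hx => (hBderiv x (lt_trans hx.2 ht.2)).hasDerivWithinAt)
      (by
        intro x hx hVB
        have hxTc : x < Tc := lt_trans hx.2 ht.2
        have hxpos := hVpos x hx
        have hle := (hF x ⟨hmemIco x hx, hxpos⟩).2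
        have hqpos : 0 < q * V x ^ α := mul_pos hq (Real.rpow_pos_of_pos hxpos α)
        have heq : -β * V x / (Tc - x) = B' x := by
          rw [hVB]
          simp only [hBdef, hB'def]
          rw [Real.rpow_sub_one (sub_pos.mpr hxTc).ne']
          field_simp
        calc F x ≤ -β * V x / (Tc - x) - q * V x ^ α := hle
          _ < -β * V x / (Tc - x) := by linarith
          _ = B' x := heq)
    have hfin : V t ≤ B t := this ⟨hslt.le, le_refl t⟩
    exact absurd hfin (not_le.mpr hcontra)
  -- now squeeze
  have hBtend : Filter.Tendsto B (nhdsWithin Tc (Set.Iio Tc)) (nhds 0) := by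
    have : Filter.Tendsto B (nhds Tc) (nhds (B Tc)) := hBcont.tendsto Tc
    have hBTc : B Tc = 0 := by
      simp [hBdef, Real.zero_rpow hβ.ne']
    rw [hBTc] at this
    exact this.mono_left nhdsWithin_le_nhds
  have hmem : Set.Ioo (0:ℝ) Tc ∈ nhdsWithin Tc (Set.Iio Tc) :=
    Ioo_mem_nhdsLT_of_mem ⟨hTc, le_refl Tc⟩
  apply squeeze_zero'
  · filter_upwards [hmem] with x hx
    exact hVnonneg x ⟨hx.1.le, hx.2⟩
  · filter_upwards [hmem] with x hx
    exact key x ⟨hx.1.le, hx.2⟩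
  · exact hBtend
end

section
/- Suppose V satisfies the time-barrier dissipation inequality and β(1−α) ≥ 1. Then there exists τ ∈ [0, T_c) such that V(t) = 0 for all t ∈ [τ, T_c); i.e., V vanishes strictly before the predefined deadline T_c and remains zero thereafter. -/
/-- If `V` satisfies the time-barrier dissipation inequality and
`β (1 - α) ≥ 1`, then there exists `τ ∈ [0, T_c)` such that `V(t) = 0` for all
`t ∈ [τ, T_c)`: `V` vanishes strictly before the predefined deadline `T_c` and
remains zero thereafter. -/
theorem time_barrier_lyapunov_vanishes_before_deadline
    (Tc q β α : ℝ) (hTc : 0 < Tc) (hq : 0 < q) (hβ : 0 < β)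
    (hα : α ∈ Set.Ioo (0 : ℝ) 1)
    (V : ℝ → ℝ)
    (hVcont : ContinuousOn V (Set.Ico 0 Tc))
    (hVnonneg : ∀ t ∈ Set.Ico (0 : ℝ) Tc, 0 ≤ V t)
    (hdiss : ∀ t ∈ Set.Ico (0 : ℝ) Tc, 0 < V t →
      ∃ v' : ℝ, HasDerivAt V v' t ∧ v' ≤ -β * V t / (Tc - t) - q * V t ^ α)
    (hcond : β * (1 - α) ≥ 1) :
    ∃ τ ∈ Set.Ico (0 : ℝ) Tc, ∀ t ∈ Set.Ico τ Tc, V t = 0 := by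
  obtain ⟨hα0, hα1⟩ := hα
  have h1α : (0:ℝ) < 1 - α := by linarith
  have hq1α : 0 < q * (1 - α) := by positivity
  -- Part 1: V vanishes somewhere in [0, Tc)
  have part1 : ∃ τ₀ ∈ Set.Ico (0:ℝ) Tc, V τ₀ = 0 := by
    by_contra hcon
    push_neg at hcon
    have hpos : ∀ t ∈ Set.Ico (0:ℝ) Tc, 0 < V t := fun t ht =>
      lt_of_le_of_ne (hVnonneg t ht) (Ne.symm (hcon t ht))
    set h : ℝ → ℝ := fun t => V t ^ (1 - α) / (Tc - t) - q * (1 - α) * Real.log (Tc - t)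
      with hdef
    have key : ∀ t ∈ Set.Ico (0:ℝ) Tc, ∃ d, HasDerivAt h d t ∧ d ≤ 0 := by
      intro t ht
      have hVt := hpos t ht
      have hs : 0 < Tc - t := by
        obtain ⟨_, h2⟩ := ht; linarith
      obtain ⟨v', hv, hb⟩ := hdiss t ht hVt
      have hW : HasDerivAt (fun x => V x ^ (1-α)) (v' * (1-α) * V t ^ (1-α-1)) t :=
        hv.rpow_const (Or.inl hVt.ne')
      have hsub : HasDerivAt (fun x : ℝ => Tc - x) (-1) t := (hasDerivAt_id t).const_sub Tc
      have hdiv := hW.div hsub hs.ne'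
      have hlog := (hsub.log hs.ne').const_mul (q * (1 - α))
      refine ⟨_, hdiv.sub hlog, ?_⟩
      -- show the derivative value is ≤ 0
      have hA : 0 < V t ^ (1-α-1) := Real.rpow_pos_of_pos hVt _
      have hw : 0 < V t ^ (1-α) := Real.rpow_pos_of_pos hVt _
      have hAV : V t ^ (1-α-1) * V t = V t ^ (1-α) := by
        have h2 := Real.rpow_add hVt (1-α-1) 1
        rw [Real.rpow_one, show (1-α-1+1 : ℝ) = 1-α by ring] at h2
        exact h2.symm
      have hAVα : V t ^ (1-α-1) * V t ^ α = 1 := by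
        rw [← Real.rpow_add hVt, show (1-α-1) + α = (0:ℝ) by ring, Real.rpow_zero]
      have hb2 : v' * (Tc - t) ≤ -β * V t - q * V t ^ α * (Tc - t) := by
        have hrw : -β * V t / (Tc - t) - q * V t ^ α
            = (-β * V t - q * V t ^ α * (Tc - t)) / (Tc - t) := by field_simp
        rw [hrw] at hb
        exact (le_div_iff₀ hs).mp hb
      have hnum : v' * (1-α) * V t ^ (1-α-1) * (Tc - t) - V t ^ (1-α) * (-1)
          + q * (1-α) * (Tc - t) ≤ 0 := by
        have hm : (1-α) * V t ^ (1-α-1) * (v' * (Tc - t))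
            ≤ (1-α) * V t ^ (1-α-1) * (-β * V t - q * V t ^ α * (Tc - t)) :=
          mul_le_mul_of_nonneg_left hb2 (by positivity)
        have hexp : (1-α) * V t ^ (1-α-1) * (-β * V t - q * V t ^ α * (Tc - t))
            = -((1-α)*β) * V t ^ (1-α) - q * (1-α) * (Tc - t) := by
          linear_combination (-(1-α)*β) * hAV + (-(q*(1-α)*(Tc-t))) * hAVα
        rw [hexp] at hm
        nlinarith [mul_nonneg hw.le (sub_nonneg.mpr hcond)]
      have hrw2 : (v' * (1-α) * V t ^ (1-α-1) * (Tc - t) - V t ^ (1-α) * (-1)) / (Tc - t)^2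
            - q * (1-α) * (-1 / (Tc - t))
          = (v' * (1-α) * V t ^ (1-α-1) * (Tc - t) - V t ^ (1-α) * (-1)
              + q * (1-α) * (Tc - t)) / (Tc - t)^2 := by
        field_simp; ring
      rw [hrw2]
      exact div_nonpos_of_nonpos_of_nonneg hnum (by positivity)
    -- choose t₁ close to Tc
    set ε : ℝ := min (Tc/2) (Real.exp (-(h 0 + 1)/(q*(1-α)))) with hε
    have hε0 : 0 < ε := lt_min (by linarith) (Real.exp_pos _)
    set t₁ : ℝ := Tc - ε with ht₁
    have ht₁0 : 0 ≤ t₁ := by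
      have : ε ≤ Tc/2 := min_le_left _ _
      simp only [ht₁]; linarith
    have ht₁Tc : t₁ < Tc := by simp only [ht₁]; linarith
    have hsubIco : Set.Icc (0:ℝ) t₁ ⊆ Set.Ico 0 Tc := fun x hx =>
      ⟨hx.1, lt_of_le_of_lt hx.2 ht₁Tc⟩
    have hanti : AntitoneOn h (Set.Icc 0 t₁) := by
      apply antitoneOn_of_deriv_nonpos (convex_Icc 0 t₁)
      · intro x hx
        obtain ⟨d, hd, _⟩ := key x (hsubIco hx)
        exact hd.continuousAt.continuousWithinAt
      · intro x hx
        rw [interior_Icc] at hx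
        obtain ⟨d, hd, _⟩ := key x (hsubIco ⟨hx.1.le, hx.2.le⟩)
        exact hd.differentiableAt.differentiableWithinAt
      · intro x hx
        rw [interior_Icc] at hx
        obtain ⟨d, hd, hd0⟩ := key x (hsubIco ⟨hx.1.le, hx.2.le⟩)
        rw [hd.deriv]; exact hd0
    have hle : h t₁ ≤ h 0 := hanti (Set.left_mem_Icc.mpr ht₁0) ⟨ht₁0, le_refl _⟩ ht₁0
    -- lower bound on h t₁
    have hlog_le : Real.log ε ≤ -(h 0 + 1)/(q*(1-α)) := by
      calc Real.log ε ≤ Real.log (Real.exp (-(h 0 + 1)/(q*(1-α)))) :=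
            Real.log_le_log hε0 (min_le_right _ _)
        _ = -(h 0 + 1)/(q*(1-α)) := Real.log_exp _
    have hmul : q * (1-α) * Real.log ε ≤ -(h 0 + 1) := by
      have := mul_le_mul_of_nonneg_left hlog_le hq1α.le
      rwa [mul_div_cancel₀ _ hq1α.ne'] at this
    have hterm : 0 ≤ V t₁ ^ (1-α) / ε := by
      have hV1 : 0 < V t₁ := hpos t₁ ⟨ht₁0, ht₁Tc⟩
      positivity
    have hTt : Tc - t₁ = ε := by simp [ht₁]
    have hht₁ : h t₁ = V t₁ ^ (1-α) / ε - q * (1-α) * Real.log ε := by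
      rw [hdef]; simp only []; rw [hTt]
    clear_value h ε t₁
    have hlow : h 0 + 1 ≤ h t₁ := by rw [hht₁]; linarith
    linarith
  -- Part 2: once zero, stays zero
  obtain ⟨τ₀, hτ₀, hVτ₀⟩ := part1
  refine ⟨τ₀, hτ₀, ?_⟩
  intro t₁ ht₁
  by_contra hne
  have ht₁mem : t₁ ∈ Set.Ico (0:ℝ) Tc := ⟨le_trans hτ₀.1 ht₁.1, ht₁.2⟩
  have hVt₁ : 0 < V t₁ := lt_of_le_of_ne (hVnonneg t₁ ht₁mem) (Ne.symm hne)
  have hIccsub : Set.Icc τ₀ t₁ ⊆ Set.Ico 0 Tc := fun x hx =>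
    ⟨le_trans hτ₀.1 hx.1, lt_of_le_of_lt hx.2 ht₁.2⟩
  set S : Set ℝ := Set.Icc τ₀ t₁ ∩ V ⁻¹' {0} with hS
  have hScl : IsClosed S :=
    (hVcont.mono hIccsub).preimage_isClosed_of_isClosed isClosed_Icc isClosed_singleton
  have hScpt : IsCompact S := IsCompact.of_isClosed_subset isCompact_Icc hScl
    Set.inter_subset_left
  have hSne : S.Nonempty := ⟨τ₀, ⟨le_refl _, ht₁.1⟩, hVτ₀⟩
  set τ' : ℝ := sSup S with hτ'
  have hτ'mem : τ' ∈ S := hScpt.sSup_mem hSne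
  have hVτ' : V τ' = 0 := hτ'mem.2
  have hτ'lt : τ' < t₁ := lt_of_le_of_ne hτ'mem.1.2 (by
    intro heq; rw [heq] at hVτ'; exact absurd hVτ' hne)
  have hposIoc : ∀ s ∈ Set.Ioc τ' t₁, 0 < V s := by
    intro s hs
    have hsmem : s ∈ Set.Ico (0:ℝ) Tc :=
      hIccsub ⟨le_trans hτ'mem.1.1 hs.1.le, hs.2⟩
    rcases lt_or_eq_of_le (hVnonneg s hsmem) with h | h
    · exact h
    · exfalso
      have : s ∈ S := ⟨⟨le_trans hτ'mem.1.1 hs.1.le, hs.2⟩, h.symm⟩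
      have : s ≤ τ' := le_csSup hScpt.bddAbove this
      linarith [hs.1]
  have hanti : AntitoneOn V (Set.Icc τ' t₁) := by
    have hsub2 : Set.Icc τ' t₁ ⊆ Set.Ico 0 Tc := fun x hx =>
      hIccsub ⟨le_trans hτ'mem.1.1 hx.1, hx.2⟩
    apply antitoneOn_of_deriv_nonpos (convex_Icc τ' t₁) (hVcont.mono hsub2)
    · intro x hx
      rw [interior_Icc] at hx
      obtain ⟨v', hv, _⟩ := hdiss x (hsub2 ⟨hx.1.le, hx.2.le⟩) (hposIoc x ⟨hx.1, hx.2.le⟩)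
      exact hv.differentiableAt.differentiableWithinAt
    · intro x hx
      rw [interior_Icc] at hx
      have hxmem := hsub2 ⟨hx.1.le, hx.2.le⟩
      have hVx := hposIoc x ⟨hx.1, hx.2.le⟩
      obtain ⟨v', hv, hb⟩ := hdiss x hxmem hVx
      rw [hv.deriv]
      have hsx : 0 < Tc - x := by obtain ⟨_, h2⟩ := hxmem; linarith
      have h1 : -β * V x / (Tc - x) ≤ 0 :=
        div_nonpos_of_nonpos_of_nonneg (by nlinarith) hsx.le
      have h2 : 0 < V x ^ α := Real.rpow_pos_of_pos hVx _
      nlinarith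
  have := hanti (Set.left_mem_Icc.mpr hτ'lt.le) (Set.right_mem_Icc.mpr hτ'lt.le) hτ'lt.le
  rw [hVτ'] at this
  linarith
end

section
/- Let x : [0, T_c) → ℝ^n be continuous, let V : ℝ^n → ℝ be continuous with V(y) ≥ ρ(‖y‖) for all y ∈ ℝ^n, where ρ : [0,∞) → [0,∞) is continuous, strictly increasing, and ρ(0) = 0. Suppose the composite function v(t) := V(x(t)) is nonnegative, and at every t ∈ [0, T_c) with v(t) > 0 it is differentiable with v'(t) ≤ −β·v(t)/(T_c − t) − q·v(t)^α. If β(1−α) ≥ 1, then x(t) → 0 (in ℝ^n) as t → T_c from the left. -/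
open Set Filter

/-- Comparison / barrier bound: under the dissipation inequality, the composite
Lyapunov function is dominated by `(v 0 + ε) ((Tc - t)/Tc) ^ β`. -/
lemma tb_aux_bound (Tc q β α : ℝ) (hTc : 0 < Tc) (hq : 0 < q) (hβ : 0 < β)
    (v : ℝ → ℝ) (hv : ContinuousOn v (Set.Ico 0 Tc))
    (hvnonneg : ∀ t ∈ Set.Ico (0:ℝ) Tc, 0 ≤ v t)
    (hdiss : ∀ t ∈ Set.Ico (0:ℝ) Tc, 0 < v t →
      ∃ v' : ℝ, HasDerivAt v v' t ∧ v' ≤ -β * v t / (Tc - t) - q * v t ^ α)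
    (ε : ℝ) (hε : 0 < ε) (t : ℝ) (ht : t ∈ Set.Ico (0:ℝ) Tc) :
    v t ≤ (v 0 + ε) * ((Tc - t)/Tc) ^ β := by
  by_contra hcon
  push_neg at hcon
  set g : ℝ → ℝ := fun u => (v 0 + ε) * ((Tc - u)/Tc) ^ β with hg
  obtain ⟨ht0, htT⟩ := ht
  have hIccsub : Set.Icc (0:ℝ) t ⊆ Set.Ico 0 Tc := fun u hu =>
    ⟨hu.1, lt_of_le_of_lt hu.2 htT⟩
  have hv0 : 0 ≤ v 0 := hvnonneg 0 ⟨le_refl 0, hTc⟩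
  have hgcont : Continuous g := by
    have : Continuous fun u : ℝ => (Tc - u)/Tc :=
      (continuous_const.sub continuous_id).div_const Tc
    exact continuous_const.mul ((Real.continuous_rpow_const hβ.le).comp this)
  -- the set of crossing points
  set S : Set ℝ := Set.Icc 0 t ∩ (fun u => v u - g u) ⁻¹' Set.Ici 0 with hS
  have hSsub : S ⊆ Set.Icc 0 t := Set.inter_subset_left
  have hSne : S.Nonempty := ⟨t, ⟨ht0, le_refl t⟩, by
    simp only [Set.mem_preimage, Set.mem_Ici, sub_nonneg]; exact hcon.le⟩
  have hScl : IsClosed S := by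
    apply ContinuousOn.preimage_isClosed_of_isClosed _ isClosed_Icc isClosed_Ici
    exact (hv.mono hIccsub).sub hgcont.continuousOn
  have hScomp : IsCompact S := isCompact_Icc.of_isClosed_subset hScl hSsub
  set c := sInf S with hc
  have hcS : c ∈ S := hScomp.sInf_mem hSne
  have hcIcc : c ∈ Set.Icc 0 t := hSsub hcS
  have hcv : g c ≤ v c := by
    have := hcS.2; simpa [sub_nonneg] using this
  have hcT : c < Tc := lt_of_le_of_lt hcIcc.2 htT
  have hTcc : 0 < Tc - c := by linarith
  have hrpos : 0 < (Tc - c)/Tc := div_pos hTcc hTc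
  have hgcpos : 0 < g c :=
    mul_pos (by linarith) (Real.rpow_pos_of_pos hrpos β)
  have hvcpos : 0 < v c := lt_of_lt_of_le hgcpos hcv
  -- c is positive since at 0 we have v 0 < g 0
  have hcpos : 0 < c := by
    rcases hcIcc.1.lt_or_eq with h | h
    · exact h
    · exfalso
      have : g 0 ≤ v 0 := h ▸ hcv
      have hg0 : g 0 = v 0 + ε := by
        simp [hg, sub_zero, div_self hTc.ne', Real.one_rpow]
      linarith
  -- below c there is no crossing
  have hbelow : ∀ u ∈ Set.Icc (0:ℝ) t, u < c → v u < g u := by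
    intro u hu huc
    by_contra hvu
    push_neg at hvu
    have : u ∈ S := ⟨hu, by simp [sub_nonneg, hvu]⟩
    exact absurd (csInf_le hScomp.isBounded.bddBelow this) (not_le.mpr huc)
  -- derivative of g at c
  have hfder : HasDerivAt (fun u : ℝ => (Tc - u)/Tc) ((0 - 1)/Tc) c :=
    ((hasDerivAt_const c Tc).sub (hasDerivAt_id c)).div_const Tc
  have hgder : HasDerivAt g ((v 0 + ε) * ((0 - 1)/Tc * β * ((Tc - c)/Tc) ^ (β - 1))) c :=
    (hfder.rpow_const (Or.inl hrpos.ne')).const_mul (v 0 + ε)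
  -- derivative of v at c
  obtain ⟨v', hvder, hvle⟩ := hdiss c ⟨hcIcc.1, hcT⟩ hvcpos
  -- identify g' with -β g c / (Tc - c)
  have hgder' : (v 0 + ε) * ((0 - 1)/Tc * β * ((Tc - c)/Tc) ^ (β - 1))
      = -β * g c / (Tc - c) := by
    have hr : ((Tc - c)/Tc) ^ β = ((Tc - c)/Tc) ^ (β - 1) * ((Tc - c)/Tc) := by
      rw [← Real.rpow_add_one hrpos.ne' (β - 1)]
      ring_nf
    simp only [hg]
    rw [hr]
    field_simp
    ring
  -- the derivative of h := v - g at c is negative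
  have hderneg : v' - (v 0 + ε) * ((0 - 1)/Tc * β * ((Tc - c)/Tc) ^ (β - 1)) < 0 := by
    rw [hgder']
    have h1 : -β * v c / (Tc - c) ≤ -β * g c / (Tc - c) := by
      rw [div_le_div_iff₀ hTcc hTcc]
      nlinarith [mul_nonneg (mul_pos hβ hTcc).le (sub_nonneg.mpr hcv)]
    have h2 : 0 < q * v c ^ α := mul_pos hq (Real.rpow_pos_of_pos hvcpos α)
    linarith
  -- first-crossing contradiction via the slope
  have hhder : HasDerivAt (fun u => v u - g u)
      (v' - (v 0 + ε) * ((0 - 1)/Tc * β * ((Tc - c)/Tc) ^ (β - 1))) c :=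
    hvder.sub hgder
  have hslope : Tendsto (slope (fun u => v u - g u) c) (nhdsWithin c (Set.Iio c))
      (nhds (v' - (v 0 + ε) * ((0 - 1)/Tc * β * ((Tc - c)/Tc) ^ (β - 1)))) :=
    (hasDerivAt_iff_tendsto_slope.mp hhder).mono_left
      (nhdsWithin_mono c (fun u hu => ne_of_lt hu))
  have hev : ∀ᶠ u in nhdsWithin c (Set.Iio c),
      slope (fun u => v u - g u) c u < 0 := hslope.eventually_lt_const hderneg
  have hmem : Set.Ioo 0 c ∈ nhdsWithin c (Set.Iio c) :=
    Ioo_mem_nhdsLT_of_mem ⟨hcpos, le_refl c⟩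
  obtain ⟨u, hu1, hu2⟩ := (hev.and (eventually_mem_set.mpr hmem)).exists
  -- hu2 : u ∈ Ioo 0 c
  have huIcc : u ∈ Set.Icc (0:ℝ) t := ⟨hu2.1.le, le_trans hu2.2.le hcIcc.2⟩
  have huv : v u < g u := hbelow u huIcc hu2.2
  have huc : u - c < 0 := by linarith [hu2.2]
  have hslope_eq : (v u - g u) - (v c - g c) = slope (fun u => v u - g u) c u * (u - c) := by
    have hne : u - c ≠ 0 := sub_ne_zero.mpr (ne_of_lt hu2.2)
    rw [slope_def_field, div_mul_cancel₀ _ hne]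
  have : 0 < (v u - g u) - (v c - g c) := by
    rw [hslope_eq]
    exact mul_pos_of_neg_of_neg hu1 huc
  linarith

/-- Theorem 1 of the paper for the state trajectory.
Let `x : [0, T_c) → ℝⁿ` be continuous and `V : ℝⁿ → ℝ` be continuous with a
class-K lower bound `ρ(‖y‖) ≤ V(y)` (`ρ` continuous, strictly increasing on
`[0, ∞)`, `ρ(0) = 0`).  If the composite `v(t) = V(x(t))` is nonnegative and
satisfies the time-barrier dissipation inequality, and `β (1 - α) ≥ 1`, then
`x(t) → 0` as `t → T_c⁻`. -/
theorem time_barrier_predefined_time_stability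
    (n : ℕ) (Tc q β α : ℝ) (hTc : 0 < Tc) (hq : 0 < q) (hβ : 0 < β)
    (hα : α ∈ Set.Ioo (0 : ℝ) 1)
    (x : ℝ → EuclideanSpace ℝ (Fin n))
    (hxcont : ContinuousOn x (Set.Ico 0 Tc))
    (V : EuclideanSpace ℝ (Fin n) → ℝ) (hVcont : Continuous V)
    (ρ : ℝ → ℝ)
    (hρcont : ContinuousOn ρ (Set.Ici 0))
    (hρmono : StrictMonoOn ρ (Set.Ici 0))
    (hρ0 : ρ 0 = 0)
    (hρle : ∀ y : EuclideanSpace ℝ (Fin n), ρ ‖y‖ ≤ V y)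
    (hvnonneg : ∀ t ∈ Set.Ico (0 : ℝ) Tc, 0 ≤ V (x t))
    (hdiss : ∀ t ∈ Set.Ico (0 : ℝ) Tc, 0 < V (x t) →
      ∃ v' : ℝ, HasDerivAt (fun s => V (x s)) v' t ∧
        v' ≤ -β * V (x t) / (Tc - t) - q * V (x t) ^ α)
    (hcond : β * (1 - α) ≥ 1) :
    Filter.Tendsto x (nhdsWithin Tc (Set.Iio Tc)) (nhds 0) := by
  set v : ℝ → ℝ := fun s => V (x s) with hv
  have hvcont : ContinuousOn v (Set.Ico 0 Tc) := hVcont.comp_continuousOn hxcont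
  -- the barrier bound with ε = 1
  have hbound : ∀ t ∈ Set.Ico (0:ℝ) Tc, v t ≤ (v 0 + 1) * ((Tc - t)/Tc) ^ β :=
    fun t ht => tb_aux_bound Tc q β α hTc hq hβ v hvcont hvnonneg hdiss 1 one_pos t ht
  set l := nhdsWithin Tc (Set.Iio Tc) with hl
  have hmem : Set.Ioo 0 Tc ∈ l := Ioo_mem_nhdsLT_of_mem ⟨hTc, le_refl Tc⟩
  -- the barrier tends to 0
  have hbar0 : Tendsto (fun t => (v 0 + 1) * ((Tc - t)/Tc) ^ β) l (nhds 0) := by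
    have h1 : Tendsto (fun t : ℝ => (Tc - t)/Tc) l (nhds 0) := by
      have : Tendsto (fun t : ℝ => (Tc - t)/Tc) (nhds Tc) (nhds ((Tc - Tc)/Tc)) :=
        ((continuous_const.sub continuous_id).div_const Tc).continuousAt
      simpa [sub_self, zero_div] using this.mono_left nhdsWithin_le_nhds
    have h2 : Tendsto (fun t : ℝ => ((Tc - t)/Tc) ^ β) l (nhds 0) := by
      have hca : ContinuousAt (fun s : ℝ => s ^ β) 0 :=
        Real.continuousAt_rpow_const 0 β (Or.inr hβ.le)
      have := hca.tendsto.comp h1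
      simpa [Real.zero_rpow hβ.ne', Function.comp_def] using this
    simpa using h2.const_mul (v 0 + 1)
  -- v tends to 0
  have hv0 : Tendsto v l (nhds 0) := by
    apply tendsto_of_tendsto_of_tendsto_of_le_of_le' tendsto_const_nhds hbar0
    · filter_upwards [hmem] with t ht
      exact hvnonneg t ⟨ht.1.le, ht.2⟩
    · filter_upwards [hmem] with t ht
      exact hbound t ⟨ht.1.le, ht.2⟩
  -- ρ ∘ ‖x‖ tends to 0
  have hρx : Tendsto (fun t => ρ ‖x t‖) l (nhds 0) := by
    apply tendsto_of_tendsto_of_tendsto_of_le_of_le' tendsto_const_nhds hv0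
    · filter_upwards with t
      have := hρmono.monotoneOn (Set.self_mem_Ici) (Set.mem_Ici.mpr (norm_nonneg (x t)))
        (norm_nonneg (x t))
      simpa [hρ0] using this
    · filter_upwards with t
      exact hρle (x t)
  -- the norm tends to 0
  have hnorm : Tendsto (fun t => ‖x t‖) l (nhds 0) := by
    rw [tendsto_order]
    constructor
    · intro a ha
      filter_upwards with t
      exact lt_of_lt_of_le ha (norm_nonneg (x t))
    · intro b hb
      have hρb : 0 < ρ b := by
        have := hρmono (Set.self_mem_Ici) (Set.mem_Ici.mpr hb.le) hb
        simpa [hρ0] using this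
      filter_upwards [hρx.eventually_lt_const hρb] with t ht
      by_contra hbt
      push_neg at hbt
      have := hρmono.monotoneOn (Set.mem_Ici.mpr hb.le)
        (Set.mem_Ici.mpr (norm_nonneg (x t))) hbt
      linarith
  exact tendsto_zero_iff_norm_tendsto_zero.mpr hnorm
end

section
/- Suppose V is differentiable at some t ∈ [0, T_c), V(t) ≥ 0, and V'(t) ≤ −β·V(t)/(T_c − t) − q·V(t)^α. Then the time-barrier transform W(s) := V(s)/(T_c − s)^β is differentiable at t and satisfies W'(t) ≤ −q·W(t)^α·(T_c − t)^{−β(1−α)}; in particular W'(t) ≤ 0. -/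
/-- If `V` is differentiable at `t ∈ [0, T_c)` with `V(t) ≥ 0` and
`V'(t) ≤ -β·V(t)/(T_c - t) - q·V(t)^α`, then the time-barrier transform
`W(s) = V(s)/(T_c - s)^β` is differentiable at `t` with
`W'(t) ≤ -q·W(t)^α·(T_c - t)^{-β(1-α)}`; in particular `W'(t) ≤ 0`. -/
theorem time_barrier_transform_deriv_ineq
    (Tc q β α : ℝ) (hTc : 0 < Tc) (hq : 0 < q) (hβ : 0 < β)
    (hα : α ∈ Set.Ioo (0 : ℝ) 1)
    (V : ℝ → ℝ) (t v' : ℝ) (ht : t ∈ Set.Ico (0 : ℝ) Tc)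
    (hVt : 0 ≤ V t)
    (hderiv : HasDerivAt V v' t)
    (hineq : v' ≤ -β * V t / (Tc - t) - q * V t ^ α) :
    ∃ w' : ℝ, HasDerivAt (fun s => V s / (Tc - s) ^ β) w' t ∧
      w' ≤ -q * (V t / (Tc - t) ^ β) ^ α * (Tc - t) ^ (-(β * (1 - α))) ∧
      w' ≤ 0 := by
  obtain ⟨ht0, htc⟩ := ht
  obtain ⟨hα0, hα1⟩ := hα
  have hx : 0 < Tc - t := sub_pos.mpr htc
  have h1 : HasDerivAt (fun s => Tc - s) (-1) t := (hasDerivAt_id t).const_sub Tc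
  have hg : HasDerivAt (fun s => (Tc - s) ^ β) (-1 * β * (Tc - t) ^ (β - 1)) t :=
    h1.rpow_const (Or.inl hx.ne')
  have hA : 0 < (Tc - t) ^ β := Real.rpow_pos_of_pos hx β
  have hAα : 0 < (Tc - t) ^ (β * α) := Real.rpow_pos_of_pos hx _
  have hW := hderiv.div hg hA.ne'
  have hexp : (V t / (Tc - t) ^ β) ^ α * (Tc - t) ^ (-(β * (1 - α)))
      = V t ^ α / (Tc - t) ^ β := by
    rw [Real.div_rpow hVt hA.le, ← Real.rpow_mul hx.le, Real.rpow_neg hx.le,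
      mul_inv_eq_iff_eq_mul₀ (by positivity),
      div_mul_eq_mul_div, div_eq_div_iff hAα.ne' hA.ne', mul_assoc, ← Real.rpow_add hx,
      show β * (1 - α) + β * α = β by ring]
  have hmain : (v' * (Tc - t) ^ β - V t * (-1 * β * (Tc - t) ^ (β - 1))) / ((Tc - t) ^ β) ^ 2
      ≤ -q * (V t / (Tc - t) ^ β) ^ α * (Tc - t) ^ (-(β * (1 - α))) := by
    rw [mul_assoc (-q), hexp]
    have hβ1 : (Tc - t) ^ (β - 1) = (Tc - t) ^ β / (Tc - t) := by
      rw [Real.rpow_sub hx, Real.rpow_one]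
    have key : v' + β * V t / (Tc - t) + q * V t ^ α ≤ 0 := by
      have h := hineq
      rw [neg_mul, neg_div] at h
      linarith
    rw [div_le_iff₀ (by positivity)]
    have hkeyA := mul_le_mul_of_nonneg_right key hA.le
    have e2 : v' * (Tc - t) ^ β - V t * (-1 * β * (Tc - t) ^ (β - 1))
        = v' * (Tc - t) ^ β + β * V t / (Tc - t) * (Tc - t) ^ β := by
      rw [hβ1]; field_simp; ring
    have e3 : -q * (V t ^ α / (Tc - t) ^ β) * ((Tc - t) ^ β) ^ 2
        = -(q * V t ^ α * (Tc - t) ^ β) := by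
      field_simp
    rw [e2, e3]
    nlinarith [hkeyA]
  have h0 : -q * (V t / (Tc - t) ^ β) ^ α * (Tc - t) ^ (-(β * (1 - α))) ≤ 0 := by
    have p1 : (0:ℝ) ≤ (V t / (Tc - t) ^ β) ^ α := Real.rpow_nonneg (by positivity) α
    have p2 : (0:ℝ) ≤ (Tc - t) ^ (-(β * (1 - α))) := (Real.rpow_pos_of_pos hx _).le
    nlinarith [mul_nonneg p1 p2, hq.le]
  exact ⟨_, hW, hmain, hmain.trans h0⟩
end

section
/- Suppose V satisfies the time-barrier dissipation inequality and V(s) > 0 for all s ∈ [0, t], where t ∈ [0, T_c). Then, with W(s) := V(s)/(T_c − s)^β, one has W(t)^{1−α} ≤ W(0)^{1−α} − q(1−α)·∫₀ᵗ (T_c − s)^{−β(1−α)} ds. -/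
/-- integrated form of the inequality in the proof of Theorem 1.
If `V` satisfies the time-barrier dissipation inequality and `V(s) > 0` on `[0, t]`
with `t ∈ [0, T_c)`, then, with `W(s) = V(s)/(T_c - s)^β`,
`W(t)^{1-α} ≤ W(0)^{1-α} - q(1-α)·∫₀ᵗ (T_c - s)^{-β(1-α)} ds`. -/
theorem time_barrier_integrated_inequality
    (Tc q β α : ℝ) (hTc : 0 < Tc) (hq : 0 < q) (hβ : 0 < β)
    (hα : α ∈ Set.Ioo (0 : ℝ) 1)
    (V : ℝ → ℝ)
    (hVcont : ContinuousOn V (Set.Ico 0 Tc))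
    (hVnonneg : ∀ s ∈ Set.Ico (0 : ℝ) Tc, 0 ≤ V s)
    (hdiss : ∀ s ∈ Set.Ico (0 : ℝ) Tc, 0 < V s →
      ∃ v' : ℝ, HasDerivAt V v' s ∧ v' ≤ -β * V s / (Tc - s) - q * V s ^ α)
    (t : ℝ) (ht : t ∈ Set.Ico (0 : ℝ) Tc)
    (hVpos : ∀ s ∈ Set.Icc (0 : ℝ) t, 0 < V s) :
    (V t / (Tc - t) ^ β) ^ (1 - α) ≤
      (V 0 / (Tc - 0) ^ β) ^ (1 - α) -
        q * (1 - α) * ∫ s in (0 : ℝ)..t, (Tc - s) ^ (-(β * (1 - α))) := by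
  obtain ⟨hα0, hα1⟩ := hα
  obtain ⟨ht0, htTc⟩ := ht
  have h1α : (0:ℝ) < 1 - α := by linarith
  set c : ℝ := -(β * (1 - α)) with hc
  have hsub : Set.Icc (0:ℝ) t ⊆ Set.Ico 0 Tc :=
    fun s hs => ⟨hs.1, lt_of_le_of_lt hs.2 htTc⟩
  have hTcs : ∀ s ∈ Set.Icc (0:ℝ) t, 0 < Tc - s := by
    intro s hs; have := (hsub hs).2; linarith
  set g : ℝ → ℝ := fun s => (Tc - s) ^ c with hg
  set F : ℝ → ℝ := fun s =>
    (V s * (Tc - s) ^ (-β)) ^ (1 - α) + q * (1-α) * ∫ u in (0:ℝ)..s, g u with hF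
  -- continuity of g on Iio Tc
  have hgcont : ContinuousOn g (Set.Iio Tc) := by
    apply ContinuousOn.rpow_const
    · exact (continuous_const.sub continuous_id).continuousOn
    · intro x hx
      left
      exact (sub_pos.mpr hx).ne'
  -- each point of Icc 0 t gives derivative of F
  have hderiv : ∀ s ∈ Set.Icc (0:ℝ) t, ∃ d, HasDerivAt F d s ∧ d ≤ 0 := by
    intro s hs
    have hT : 0 < Tc - s := hTcs s hs
    have hV : 0 < V s := hVpos s hs
    obtain ⟨v', hVd, hv'⟩ := hdiss s (hsub hs) hV
    -- derivative of (Tc - ·)^(-β)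
    have hB : HasDerivAt (fun u => (Tc - u) ^ (-β))
        ((-1) * (-β) * (Tc - s) ^ (-β - 1)) s := by
      have hbase : HasDerivAt (fun u => Tc - u) (-1) s :=
        (hasDerivAt_id s).const_sub Tc
      exact hbase.rpow_const (Or.inl hT.ne')
    have hWpos : 0 < V s * (Tc - s) ^ (-β) :=
      mul_pos hV (Real.rpow_pos_of_pos hT _)
    have hprod : HasDerivAt (fun u => V u * (Tc - u) ^ (-β))
        (v' * (Tc - s) ^ (-β) + V s * ((-1) * (-β) * (Tc - s) ^ (-β - 1))) s :=
      hVd.mul hB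
    have houter : HasDerivAt (fun u => (V u * (Tc - u) ^ (-β)) ^ (1 - α))
        ((v' * (Tc - s) ^ (-β) + V s * ((-1) * (-β) * (Tc - s) ^ (-β - 1))) * (1 - α)
          * (V s * (Tc - s) ^ (-β)) ^ (1 - α - 1)) s :=
      hprod.rpow_const (Or.inl hWpos.ne')
    -- derivative of integral
    have hgint : IntervalIntegrable g MeasureTheory.volume 0 s := by
      apply ContinuousOn.intervalIntegrable
      apply hgcont.mono
      intro x hx
      rcases hs with ⟨hs0, hst⟩
      have : x ∈ Set.Icc (0:ℝ) s := by
        rcases Set.mem_uIcc.mp hx with h | h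
        · exact ⟨h.1, h.2⟩
        · exact ⟨le_trans hs0 h.1, le_trans h.2 hs0⟩
      exact lt_of_le_of_lt (le_trans this.2 hst) htTc
    have hsIio : s ∈ Set.Iio Tc := lt_of_le_of_lt hs.2 htTc
    have hint : HasDerivAt (fun u => ∫ x in (0:ℝ)..u, g x) (g s) s :=
      intervalIntegral.integral_hasDerivAt_right hgint
        (hgcont.stronglyMeasurableAtFilter isOpen_Iio s hsIio)
        (hgcont.continuousAt (isOpen_Iio.mem_nhds hsIio))
    have hFd : HasDerivAt F
        ((v' * (Tc - s) ^ (-β) + V s * ((-1) * (-β) * (Tc - s) ^ (-β - 1))) * (1 - α)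
          * (V s * (Tc - s) ^ (-β)) ^ (1 - α - 1) + q * (1-α) * g s) s :=
      houter.add (hint.const_mul (q * (1-α)))
    refine ⟨_, hFd, ?_⟩
    -- now show the derivative is ≤ 0
    have hh' : v' * (Tc - s) ^ (-β) + V s * ((-1) * (-β) * (Tc - s) ^ (-β - 1))
        ≤ -(q * V s ^ α * (Tc - s) ^ (-β)) := by
      have hmul : v' * (Tc - s) ^ (-β)
          ≤ (-β * V s / (Tc - s) - q * V s ^ α) * (Tc - s) ^ (-β) :=
        mul_le_mul_of_nonneg_right hv' (Real.rpow_pos_of_pos hT _).le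
      have hsplit : (Tc - s) ^ (-β - 1) = (Tc - s) ^ (-β) * (Tc - s)⁻¹ := by
        rw [← Real.rpow_neg_one (Tc - s), ← Real.rpow_add hT]
        ring_nf
      have hdivmul : -β * V s / (Tc - s) * (Tc - s) ^ (-β)
          = -(V s * ((-1) * (-β) * (Tc - s) ^ (-β - 1))) := by
        rw [hsplit, div_eq_mul_inv]; ring
      calc v' * (Tc - s) ^ (-β) + V s * ((-1) * (-β) * (Tc - s) ^ (-β - 1))
          ≤ (-β * V s / (Tc - s) - q * V s ^ α) * (Tc - s) ^ (-β)
            + V s * ((-1) * (-β) * (Tc - s) ^ (-β - 1)) := by linarith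
        _ = -(q * V s ^ α * (Tc - s) ^ (-β)) := by
            rw [sub_mul, hdivmul]; ring
    have hkey : (V s * (Tc - s) ^ (-β)) ^ (1 - α - 1) * (V s ^ α * (Tc - s) ^ (-β))
        = (Tc - s) ^ c := by
      have h1 : (1:ℝ) - α - 1 = -α := by ring
      rw [h1, Real.mul_rpow hV.le (Real.rpow_pos_of_pos hT (-β)).le,
        ← Real.rpow_mul hT.le, mul_mul_mul_comm, ← Real.rpow_add hV,
        ← Real.rpow_add hT, neg_add_cancel, Real.rpow_zero, one_mul]
      congr 1
      rw [hc]; ring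
    have hfac : (0:ℝ) ≤ (1 - α) * (V s * (Tc - s) ^ (-β)) ^ (1 - α - 1) :=
      mul_nonneg h1α.le (Real.rpow_pos_of_pos hWpos _).le
    have hineq : (v' * (Tc - s) ^ (-β) + V s * ((-1) * (-β) * (Tc - s) ^ (-β - 1)))
        * (1 - α) * (V s * (Tc - s) ^ (-β)) ^ (1 - α - 1)
        ≤ -(q * V s ^ α * (Tc - s) ^ (-β)) * (1 - α)
          * (V s * (Tc - s) ^ (-β)) ^ (1 - α - 1) := by
      have := mul_le_mul_of_nonneg_right hh' hfac
      calc _ = (v' * (Tc - s) ^ (-β) + V s * ((-1) * (-β) * (Tc - s) ^ (-β - 1)))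
            * ((1 - α) * (V s * (Tc - s) ^ (-β)) ^ (1 - α - 1)) := by ring
        _ ≤ -(q * V s ^ α * (Tc - s) ^ (-β))
            * ((1 - α) * (V s * (Tc - s) ^ (-β)) ^ (1 - α - 1)) := this
        _ = _ := by ring
    have hrhs : -(q * V s ^ α * (Tc - s) ^ (-β)) * (1 - α)
          * (V s * (Tc - s) ^ (-β)) ^ (1 - α - 1) = -(q * (1-α) * g s) := by
      have : -(q * V s ^ α * (Tc - s) ^ (-β)) * (1 - α)
          * (V s * (Tc - s) ^ (-β)) ^ (1 - α - 1)
          = -(q * (1-α)) * ((V s * (Tc - s) ^ (-β)) ^ (1 - α - 1)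
            * (V s ^ α * (Tc - s) ^ (-β))) := by ring
      rw [this, hkey]; rw [hg]; ring
    rw [hrhs] at hineq
    linarith
  -- F is antitone on Icc 0 t
  have hanti : AntitoneOn F (Set.Icc 0 t) := by
    have hdiff : ∀ s ∈ Set.Icc (0:ℝ) t, DifferentiableAt ℝ F s := by
      intro s hs; obtain ⟨d, hd, _⟩ := hderiv s hs; exact hd.differentiableAt
    apply antitoneOn_of_deriv_nonpos (convex_Icc 0 t)
    · exact fun s hs => (hdiff s hs).continuousAt.continuousWithinAt
    · intro s hs
      exact ((hdiff s (interior_subset hs)).differentiableWithinAt)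
    · intro s hs
      obtain ⟨d, hd, hd0⟩ := hderiv s (interior_subset hs)
      rw [hd.deriv]; exact hd0
  have hFt : F t ≤ F 0 := hanti (Set.left_mem_Icc.mpr ht0) (Set.right_mem_Icc.mpr ht0) ht0
  have hF0 : F 0 = (V 0 * (Tc - 0) ^ (-β)) ^ (1 - α) := by
    simp [hF]
  have hdivT : V t / (Tc - t) ^ β = V t * (Tc - t) ^ (-β) := by
    rw [Real.rpow_neg (hTcs t (Set.right_mem_Icc.mpr ht0)).le, div_eq_mul_inv]
  have hdiv0 : V 0 / (Tc - 0) ^ β = V 0 * (Tc - 0) ^ (-β) := by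
    rw [Real.rpow_neg (by simpa using hTc.le), div_eq_mul_inv]
  rw [hdivT, hdiv0]
  have := hFt
  rw [hF0] at this
  simp only [hF] at this
  linarith
end

section
/- Let V : [0, T_c) → ℝ be continuous and nonnegative, and suppose at every t ∈ [0, T_c) with V(t) > 0, V is differentiable at t with V'(t) ≤ −β·V(t)/(T_c − t). Then V(t) ≤ V(0)·((T_c − t)/T_c)^β for all t ∈ [0, T_c); in particular V(t) → 0 as t → T_c from the left. -/
open Set Filter

/-- Auxiliary comparison: on an interval `[a,b] ⊆ [0,Tc)` where `V` is positive,
the transform `W(t) = V(t)·(Tc - t)^(-β)` is nonincreasing, which yields the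
explicit decay estimate. -/
lemma time_barrier_decay_aux
    (Tc β : ℝ) (hTc : 0 < Tc) (hβ : 0 < β)
    (V : ℝ → ℝ)
    (hVcont : ContinuousOn V (Set.Ico 0 Tc))
    (hdiss : ∀ t ∈ Set.Ico (0 : ℝ) Tc, 0 < V t →
      ∃ v' : ℝ, HasDerivAt V v' t ∧ v' ≤ -β * V t / (Tc - t))
    (a b : ℝ) (ha : 0 ≤ a) (hab : a ≤ b) (hb : b < Tc)
    (hpos : ∀ t ∈ Set.Icc a b, 0 < V t) :
    V b ≤ V a * ((Tc - b) / (Tc - a)) ^ β := by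
  have hsub : Set.Icc a b ⊆ Set.Ico 0 Tc := fun t ht =>
    ⟨le_trans ha ht.1, lt_of_le_of_lt ht.2 hb⟩
  set W : ℝ → ℝ := fun t => V t * (Tc - t) ^ (-β) with hW
  -- positivity of Tc - t on the interval
  have hTcpos : ∀ t ∈ Set.Icc a b, 0 < Tc - t := fun t ht =>
    sub_pos.2 (lt_of_le_of_lt ht.2 hb)
  -- W has nonpositive derivative on the interior
  have hderiv : ∀ x ∈ Set.Ioo a b,
      ∃ w' : ℝ, HasDerivAt W w' x ∧ w' ≤ 0 := by
    intro x hx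
    have hxI : x ∈ Set.Icc a b := Set.Ioo_subset_Icc_self hx
    have hxTc : 0 < Tc - x := hTcpos x hxI
    have hVx : 0 < V x := hpos x hxI
    obtain ⟨v', hv', hv'le⟩ := hdiss x (hsub hxI) hVx
    have h1 : HasDerivAt (fun t => Tc - t) (-1) x := by
      exact (hasDerivAt_id' x).const_sub Tc
    have h2 : HasDerivAt (fun t => (Tc - t) ^ (-β))
        ((-1) * (-β) * (Tc - x) ^ (-β - 1)) x :=
      h1.rpow_const (Or.inl (ne_of_gt hxTc))
    have h3 : HasDerivAt W
        (v' * (Tc - x) ^ (-β) + V x * ((-1) * (-β) * (Tc - x) ^ (-β - 1))) x :=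
      hv'.mul h2
    refine ⟨_, h3, ?_⟩
    have hP : (0:ℝ) < (Tc - x) ^ (-β) := Real.rpow_pos_of_pos hxTc _
    have hQeq : (Tc - x) ^ (-β) / (Tc - x) = (Tc - x) ^ (-β - 1) := by
      rw [Real.rpow_sub hxTc, Real.rpow_one]
    have hkey : v' * (Tc - x) ^ (-β) ≤ -β * V x * (Tc - x) ^ (-β - 1) := by
      calc v' * (Tc - x) ^ (-β) ≤ (-β * V x / (Tc - x)) * (Tc - x) ^ (-β) :=
            mul_le_mul_of_nonneg_right hv'le hP.le
        _ = -β * V x * ((Tc - x) ^ (-β) / (Tc - x)) := by ring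
        _ = -β * V x * (Tc - x) ^ (-β - 1) := by rw [hQeq]
    nlinarith [hkey]
  -- W is antitone on [a,b]
  have hWcont : ContinuousOn W (Set.Icc a b) := by
    refine (hVcont.mono hsub).mul ?_
    refine ((continuousOn_const.sub continuousOn_id).rpow_const ?_)
    exact fun t ht => Or.inl (ne_of_gt (hTcpos t ht))
  have hWanti : AntitoneOn W (Set.Icc a b) := by
    refine antitoneOn_of_deriv_nonpos (convex_Icc a b) hWcont ?_ ?_
    · intro x hx
      rw [interior_Icc] at hx
      obtain ⟨w', hw', _⟩ := hderiv x hx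
      exact hw'.differentiableAt.differentiableWithinAt
    · intro x hx
      rw [interior_Icc] at hx
      obtain ⟨w', hw', hle⟩ := hderiv x hx
      rw [hw'.deriv]; exact hle
  have hWab : W b ≤ W a :=
    hWanti (Set.left_mem_Icc.2 hab) (Set.right_mem_Icc.2 hab) hab
  -- convert back
  have haTc : 0 < Tc - a := hTcpos a (Set.left_mem_Icc.2 hab)
  have hbTc : 0 < Tc - b := hTcpos b (Set.right_mem_Icc.2 hab)
  have hmul := mul_le_mul_of_nonneg_right hWab (Real.rpow_nonneg hbTc.le β)
  have hL : W b * (Tc - b) ^ β = V b := by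
    rw [hW]
    simp only
    rw [mul_assoc, ← Real.rpow_add hbTc, neg_add_cancel, Real.rpow_zero, mul_one]
  have hR : W a * (Tc - b) ^ β = V a * ((Tc - b) / (Tc - a)) ^ β := by
    rw [hW]
    simp only
    rw [Real.div_rpow hbTc.le haTc.le, Real.rpow_neg haTc.le]
    ring
  rw [hL, hR] at hmul
  exact hmul

/-- decay envelope from the barrier term alone.
If `V : [0, T_c) → ℝ` is continuous, nonnegative, and satisfies
`V'(t) ≤ -β·V(t)/(T_c - t)` at every `t` with `V(t) > 0`, then
`V(t) ≤ V(0)·((T_c - t)/T_c)^β` for all `t ∈ [0, T_c)`; in particular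
`V(t) → 0` as `t → T_c⁻`. -/
theorem time_barrier_decay_envelope
    (Tc β : ℝ) (hTc : 0 < Tc) (hβ : 0 < β)
    (V : ℝ → ℝ)
    (hVcont : ContinuousOn V (Set.Ico 0 Tc))
    (hVnonneg : ∀ t ∈ Set.Ico (0 : ℝ) Tc, 0 ≤ V t)
    (hdiss : ∀ t ∈ Set.Ico (0 : ℝ) Tc, 0 < V t →
      ∃ v' : ℝ, HasDerivAt V v' t ∧ v' ≤ -β * V t / (Tc - t)) :
    (∀ t ∈ Set.Ico (0 : ℝ) Tc, V t ≤ V 0 * ((Tc - t) / Tc) ^ β) ∧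
      Filter.Tendsto V (nhdsWithin Tc (Set.Iio Tc)) (nhds 0) := by
  have hV0 : 0 ≤ V 0 := hVnonneg 0 ⟨le_refl 0, hTc⟩
  have main : ∀ t ∈ Set.Ico (0 : ℝ) Tc, V t ≤ V 0 * ((Tc - t) / Tc) ^ β := by
    intro t1 ht1
    obtain ⟨ht1a, ht1b⟩ := ht1
    by_cases hz : ∃ s ∈ Set.Icc 0 t1, V s = 0
    · -- there is a zero before t1; show V t1 = 0
      have henv : 0 ≤ V 0 * ((Tc - t1) / Tc) ^ β :=
        mul_nonneg hV0 (Real.rpow_nonneg (div_nonneg (sub_nonneg.2 ht1b.le) hTc.le) β)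
      rcases le_or_gt (V t1) 0 with h | h
      · linarith
      · exfalso
        -- let s1 be the last zero in [0, t1]
        set Z : Set ℝ := Set.Icc 0 t1 ∩ V ⁻¹' {0} with hZ
        have hsubI : Set.Icc 0 t1 ⊆ Set.Ico 0 Tc := fun s hs =>
          ⟨hs.1, lt_of_le_of_lt hs.2 ht1b⟩
        have hZc : IsCompact Z := by
          refine (isCompact_Icc).of_isClosed_subset ?_ Set.inter_subset_left
          exact (hVcont.mono hsubI).preimage_isClosed_of_isClosed isClosed_Icc
            isClosed_singleton
        obtain ⟨s0, hs0⟩ := hz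
        have hZne : Z.Nonempty := ⟨s0, hs0.1, hs0.2⟩
        set s1 := sSup Z with hs1def
        have hs1mem : s1 ∈ Z := hZc.sSup_mem hZne
        have hVs1 : V s1 = 0 := hs1mem.2
        have hs1I : s1 ∈ Set.Icc 0 t1 := hs1mem.1
        have hs1lt : s1 < t1 := lt_of_le_of_ne hs1I.2 (by
          intro he; rw [he] at hVs1; linarith)
        -- for c ∈ (s1, t1], V > 0 on [c, t1] hence V t1 ≤ V c
        have hdec : ∀ c ∈ Set.Ioc s1 t1, V t1 ≤ V c := by
          intro c hc
          have hc0 : 0 ≤ c := le_trans hs1I.1 hc.1.le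
          have hpos : ∀ s ∈ Set.Icc c t1, 0 < V s := by
            intro s hs
            have hsI : s ∈ Set.Ico 0 Tc :=
              ⟨le_trans hc0 hs.1, lt_of_le_of_lt hs.2 ht1b⟩
            rcases lt_or_eq_of_le (hVnonneg s hsI) with hp | hp
            · exact hp
            · exfalso
              have hsZ : s ∈ Z := ⟨⟨le_trans hc0 hs.1, hs.2⟩, by simp [← hp]⟩
              have : s ≤ s1 := le_csSup hZc.bddAbove hsZ
              linarith [hc.1, hs.1]
          have := time_barrier_decay_aux Tc β hTc hβ V hVcont hdiss
            c t1 hc0 hc.2 ht1b hpos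
          have hratio : ((Tc - t1) / (Tc - c)) ^ β ≤ 1 := by
            have hcTc : 0 < Tc - c := sub_pos.2 (lt_of_le_of_lt hc.2 ht1b)
            refine Real.rpow_le_one (div_nonneg (sub_nonneg.2 ht1b.le) hcTc.le) ?_ hβ.le
            rw [div_le_one hcTc]
            linarith [hc.2]
          have hVc : 0 ≤ V c := (hpos c (Set.left_mem_Icc.2 hc.2)).le
          calc V t1 ≤ V c * ((Tc - t1) / (Tc - c)) ^ β := this
            _ ≤ V c * 1 := mul_le_mul_of_nonneg_left hratio hVc
            _ = V c := mul_one _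
        -- take the limit c → s1⁺
        have hs1Ico : s1 ∈ Set.Ico 0 Tc := hsubI hs1I
        have hcw : ContinuousWithinAt V (Set.Ioc s1 t1) s1 :=
          ((hVcont s1 hs1Ico).mono (fun x hx =>
            ⟨le_trans hs1I.1 hx.1.le, lt_of_le_of_lt hx.2 ht1b⟩))
        have hten : Filter.Tendsto V (nhdsWithin s1 (Set.Ioi s1)) (nhds (V s1)) :=
          hcw.mono_left (nhdsWithin_le_of_mem
            (Ioc_mem_nhdsGT_of_mem ⟨le_refl s1, hs1lt⟩))
        have hev : ∀ᶠ c in nhdsWithin s1 (Set.Ioi s1), V t1 ≤ V c :=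
          Filter.eventually_iff_exists_mem.2
            ⟨Set.Ioc s1 t1, Ioc_mem_nhdsGT_of_mem ⟨le_refl s1, hs1lt⟩, hdec⟩
        have : V t1 ≤ V s1 := ge_of_tendsto hten hev
        rw [hVs1] at this
        linarith
    · -- V > 0 on all of [0, t1]
      push_neg at hz
      have hpos : ∀ s ∈ Set.Icc 0 t1, 0 < V s := by
        intro s hs
        have hsI : s ∈ Set.Ico 0 Tc := ⟨hs.1, lt_of_le_of_lt hs.2 ht1b⟩
        exact lt_of_le_of_ne (hVnonneg s hsI) (fun h => hz s hs h.symm)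
      have := time_barrier_decay_aux Tc β hTc hβ V hVcont hdiss
        0 t1 (le_refl 0) ht1a ht1b hpos
      simpa using this
  refine ⟨main, ?_⟩
  -- squeeze: eventually in 𝓝[<] Tc, t ∈ [0, Tc)
  have hmem : Set.Ico 0 Tc ∈ nhdsWithin Tc (Set.Iio Tc) := by
    have : Set.Ioo (0:ℝ) Tc ∈ nhdsWithin Tc (Set.Iio Tc) :=
      Ioo_mem_nhdsLT_of_mem ⟨hTc, le_refl Tc⟩
    exact Filter.mem_of_superset this Set.Ioo_subset_Ico_self
  have h1 : ∀ᶠ t in nhdsWithin Tc (Set.Iio Tc), 0 ≤ V t :=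
    Filter.eventually_iff_exists_mem.2 ⟨_, hmem, hVnonneg⟩
  have h2 : ∀ᶠ t in nhdsWithin Tc (Set.Iio Tc),
      V t ≤ V 0 * ((Tc - t) / Tc) ^ β :=
    Filter.eventually_iff_exists_mem.2 ⟨_, hmem, main⟩
  have h3 : Filter.Tendsto (fun t => V 0 * ((Tc - t) / Tc) ^ β)
      (nhdsWithin Tc (Set.Iio Tc)) (nhds 0) := by
    have hbase : Filter.Tendsto (fun t => (Tc - t) / Tc)
        (nhdsWithin Tc (Set.Iio Tc)) (nhds 0) := by
      have hcont : Continuous (fun t : ℝ => (Tc - t) / Tc) := by continuity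
      have := hcont.tendsto Tc
      simp only [sub_self, zero_div] at this
      exact this.mono_left nhdsWithin_le_nhds
    have hrpow : Filter.Tendsto (fun t => ((Tc - t) / Tc) ^ β)
        (nhdsWithin Tc (Set.Iio Tc)) (nhds 0) := by
      have hc : ContinuousAt (fun x : ℝ => x ^ β) 0 :=
        Real.continuousAt_rpow_const 0 β (Or.inr hβ.le)
      have := hc.tendsto.comp hbase
      simpa [Function.comp_def, Real.zero_rpow (ne_of_gt hβ)] using this
    have := hrpow.const_mul (V 0)
    simpa using this
  exact squeeze_zero' h1 h2 h3
end

section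
/- Suppose V satisfies the time-barrier dissipation inequality with β(1−α) = 1, and V(s) > 0 for all s ∈ [0, t], where t ∈ (0, T_c). Then V(t)^{1−α} ≤ (T_c − t)·( V(0)^{1−α}/T_c − q(1−α)·log(T_c/(T_c − t)) ). -/
/-- explicit settling bound in the boundary case `β(1-α) = 1`.
If `V` satisfies the time-barrier dissipation inequality with `β(1-α) = 1` and
`V(s) > 0` on `[0, t]` with `t ∈ (0, T_c)`, then
`V(t)^{1-α} ≤ (T_c - t)·(V(0)^{1-α}/T_c - q(1-α)·log(T_c/(T_c - t)))`. -/
theorem time_barrier_settling_bound_boundary_case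
    (Tc q β α : ℝ) (hTc : 0 < Tc) (hq : 0 < q) (hβ : 0 < β)
    (hα : α ∈ Set.Ioo (0 : ℝ) 1)
    (V : ℝ → ℝ)
    (hVcont : ContinuousOn V (Set.Ico 0 Tc))
    (hVnonneg : ∀ s ∈ Set.Ico (0 : ℝ) Tc, 0 ≤ V s)
    (hdiss : ∀ s ∈ Set.Ico (0 : ℝ) Tc, 0 < V s →
      ∃ v' : ℝ, HasDerivAt V v' s ∧ v' ≤ -β * V s / (Tc - s) - q * V s ^ α)
    (hcond : β * (1 - α) = 1)
    (t : ℝ) (ht : t ∈ Set.Ioo (0 : ℝ) Tc)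
    (hVpos : ∀ s ∈ Set.Icc (0 : ℝ) t, 0 < V s) :
    V t ^ (1 - α) ≤
      (Tc - t) * (V 0 ^ (1 - α) / Tc - q * (1 - α) * Real.log (Tc / (Tc - t))) := by
  obtain ⟨hα0, hα1⟩ := hα
  obtain ⟨ht0, htTc⟩ := ht
  have hsub : Set.Icc (0:ℝ) t ⊆ Set.Ico 0 Tc := fun s hs =>
    ⟨hs.1, lt_of_le_of_lt hs.2 htTc⟩
  set g : ℝ → ℝ := fun s => V s ^ (1-α) * (Tc - s)⁻¹ - q*(1-α) * Real.log (Tc - s)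
    with hgdef
  -- key derivative fact on the interior
  have hkey : ∀ x ∈ Set.Ioo (0:ℝ) t, ∃ G : ℝ, HasDerivAt g G x ∧ G ≤ 0 := by
    intro x hx
    have hxIcc : x ∈ Set.Icc (0:ℝ) t := ⟨le_of_lt hx.1, le_of_lt hx.2⟩
    have hxIco : x ∈ Set.Ico (0:ℝ) Tc := hsub hxIcc
    have hVx : 0 < V x := hVpos x hxIcc
    have hr : 0 < Tc - x := by linarith [hxIco.2]
    have hrne : Tc - x ≠ 0 := ne_of_gt hr
    obtain ⟨v', hv', hbound⟩ := hdiss x hxIco hVx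
    have hlin : HasDerivAt (fun y : ℝ => Tc - y) (-1) x := by
      simpa using (hasDerivAt_id x).const_sub Tc
    have h1 : HasDerivAt (fun y => V y ^ (1-α)) (v' * (1-α) * V x ^ (1-α-1)) x :=
      hv'.rpow_const (Or.inl (ne_of_gt hVx))
    have h2 : HasDerivAt (fun y : ℝ => (Tc - y)⁻¹) (-(-1) / (Tc - x)^2) x :=
      hlin.inv hrne
    have h3 : HasDerivAt (fun y : ℝ => Real.log (Tc - y)) ((-1) / (Tc - x)) x :=
      hlin.log hrne
    have hG : HasDerivAt g
        ((v' * (1-α) * V x ^ (1-α-1)) * (Tc - x)⁻¹ + V x ^ (1-α) * (-(-1) / (Tc - x)^2)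
          - q*(1-α) * ((-1) / (Tc - x))) x :=
      ((h1.mul h2).sub (h3.const_mul (q*(1-α))))
    refine ⟨_, hG, ?_⟩
    set A := V x ^ (1-α-1) with hA
    set B := V x ^ (1-α) with hB
    set C := V x ^ α with hC
    have hApos : 0 < A := Real.rpow_pos_of_pos hVx _
    have hBpos : 0 < B := Real.rpow_pos_of_pos hVx _
    have hCpos : 0 < C := Real.rpow_pos_of_pos hVx _
    have hAV : A * V x = B := by
      rw [hA, hB, ← Real.rpow_add_one (ne_of_gt hVx)]; ring_nf
    have hAC : A * C = 1 := by
      rw [hA, hC, ← Real.rpow_add hVx]; norm_num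
    -- multiply the dissipation bound by (Tc - x)
    have hkey2 : v' * (Tc - x) ≤ -(β * V x) - q * C * (Tc - x) := by
      have h := mul_le_mul_of_nonneg_right hbound (le_of_lt hr)
      calc v' * (Tc - x) ≤ (-β * V x / (Tc - x) - q * C) * (Tc - x) := h
        _ = -(β * V x) - q * C * (Tc - x) := by field_simp
    -- numerator bound
    have hnum : (1-α) * A * (v' * (Tc - x)) + B + q*(1-α)*(Tc - x) ≤ 0 := by
      have hmul : (1-α) * A * (v' * (Tc - x)) ≤
          (1-α) * A * (-(β * V x) - q * C * (Tc - x)) := by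
        apply mul_le_mul_of_nonneg_left hkey2
        have h1α : (0:ℝ) < 1 - α := by linarith
        exact mul_nonneg h1α.le hApos.le
      have hexp : (1-α) * A * (-(β * V x) - q * C * (Tc - x))
          = -(β*(1-α)) * B - q*(1-α)*(A*C)*(Tc - x) := by
        nlinarith [hAV, hAC]
      rw [hcond, hAC] at hexp
      nlinarith [hmul, hexp]
    have hform : (v' * (1-α) * A) * (Tc - x)⁻¹ + B * (-(-1) / (Tc - x)^2)
          - q*(1-α) * ((-1) / (Tc - x))
        = ((1-α) * A * (v' * (Tc - x)) + B + q*(1-α)*(Tc - x)) / (Tc - x)^2 := by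
      field_simp; ring
    rw [hform]
    exact div_nonpos_of_nonpos_of_nonneg hnum (by positivity)
  -- g is antitone on [0,t]
  have hcont : ContinuousOn g (Set.Icc 0 t) := by
    have hVc : ContinuousOn V (Set.Icc 0 t) := hVcont.mono hsub
    have hrne : ∀ s ∈ Set.Icc (0:ℝ) t, Tc - s ≠ 0 := fun s hs => by
      have := (hsub hs).2; intro h; linarith
    apply ContinuousOn.sub
    · apply ContinuousOn.mul
      · exact hVc.rpow_const (fun s hs => Or.inl (ne_of_gt (hVpos s hs)))
      · exact ((continuousOn_const.sub continuousOn_id).inv₀ hrne)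
    · exact ContinuousOn.const_smul
        ((continuousOn_const.sub continuousOn_id).log hrne) (q*(1-α))
  have hanti : AntitoneOn g (Set.Icc 0 t) := by
    apply antitoneOn_of_deriv_nonpos (convex_Icc 0 t) hcont
    · intro x hx
      rw [interior_Icc] at hx
      obtain ⟨G, hG, _⟩ := hkey x hx
      exact hG.differentiableAt.differentiableWithinAt
    · intro x hx
      rw [interior_Icc] at hx
      obtain ⟨G, hG, hG0⟩ := hkey x hx
      rw [hG.deriv]; exact hG0
  have hgt : g t ≤ g 0 :=
    hanti (Set.left_mem_Icc.mpr (le_of_lt ht0)) (Set.right_mem_Icc.mpr (le_of_lt ht0))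
      (le_of_lt ht0)
  -- unfold and finish
  have hrt : 0 < Tc - t := by linarith
  have hlogdiv : Real.log (Tc / (Tc - t)) = Real.log Tc - Real.log (Tc - t) :=
    Real.log_div (ne_of_gt hTc) (ne_of_gt hrt)
  simp only [hgdef] at hgt
  rw [hlogdiv]
  have h0 : V t ^ (1-α) * (Tc - t)⁻¹ ≤
      V 0 ^ (1-α) * Tc⁻¹ - q*(1-α)*Real.log Tc + q*(1-α)*Real.log (Tc - t) := by
    simpa using hgt
  calc V t ^ (1-α) = (V t ^ (1-α) * (Tc - t)⁻¹) * (Tc - t) := by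
        field_simp
    _ ≤ (V 0 ^ (1-α) * Tc⁻¹ - q*(1-α)*Real.log Tc + q*(1-α)*Real.log (Tc - t)) * (Tc - t) :=
        mul_le_mul_of_nonneg_right h0 (le_of_lt hrt)
    _ = (Tc - t) * (V 0 ^ (1 - α) / Tc - q * (1 - α) * (Real.log Tc - Real.log (Tc - t))) := by
        field_simp; ring
end

section
/- Suppose V satisfies the time-barrier dissipation inequality with c := β(1−α) > 1, and V(s) > 0 for all s ∈ [0, t], where t ∈ (0, T_c). Then V(t)^{1−α} ≤ (T_c − t)^{c}·( V(0)^{1−α}·T_c^{−c} − q(1−α)·((T_c − t)^{1−c} − T_c^{1−c})/(c − 1) ). -/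
/-- explicit settling bound for `c = β(1-α) > 1`.
If `V` satisfies the time-barrier dissipation inequality with `c = β(1-α) > 1`
and `V(s) > 0` on `[0, t]` with `t ∈ (0, T_c)`, then
`V(t)^{1-α} ≤ (T_c - t)^c·(V(0)^{1-α}·T_c^{-c} - q(1-α)·((T_c - t)^{1-c} - T_c^{1-c})/(c-1))`. -/
theorem time_barrier_settling_bound_supercritical_case
    (Tc q β α c : ℝ) (hTc : 0 < Tc) (hq : 0 < q) (hβ : 0 < β)
    (hα : α ∈ Set.Ioo (0 : ℝ) 1)
    (V : ℝ → ℝ)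
    (hVcont : ContinuousOn V (Set.Ico 0 Tc))
    (hVnonneg : ∀ s ∈ Set.Ico (0 : ℝ) Tc, 0 ≤ V s)
    (hdiss : ∀ s ∈ Set.Ico (0 : ℝ) Tc, 0 < V s →
      ∃ v' : ℝ, HasDerivAt V v' s ∧ v' ≤ -β * V s / (Tc - s) - q * V s ^ α)
    (hc : c = β * (1 - α)) (hc1 : 1 < c)
    (t : ℝ) (ht : t ∈ Set.Ioo (0 : ℝ) Tc)
    (hVpos : ∀ s ∈ Set.Icc (0 : ℝ) t, 0 < V s) :
    V t ^ (1 - α) ≤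
      (Tc - t) ^ c *
        (V 0 ^ (1 - α) * Tc ^ (-c) -
          q * (1 - α) * (((Tc - t) ^ (1 - c) - Tc ^ (1 - c)) / (c - 1))) := by
  obtain ⟨ht0, htT⟩ := ht
  obtain ⟨hα0, hα1⟩ := hα
  have h1α : 0 < 1 - α := by linarith
  set F : ℝ → ℝ := fun s =>
    V s ^ (1 - α) * (Tc - s) ^ (-c) +
      q * (1 - α) * (((Tc - s) ^ (1 - c) - Tc ^ (1 - c)) / (c - 1)) with hF
  have key : ∀ x ∈ Set.Icc (0 : ℝ) t, ∃ e, HasDerivAt F e x ∧ e ≤ 0 := by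
    intro x hx
    have hxT : x < Tc := lt_of_le_of_lt hx.2 htT
    have hxIco : x ∈ Set.Ico (0 : ℝ) Tc := ⟨hx.1, hxT⟩
    have hVx : 0 < V x := hVpos x hx
    have hP : 0 < Tc - x := by linarith
    obtain ⟨v', hv', hle⟩ := hdiss x hxIco hVx
    have hd1 : HasDerivAt (fun s => V s ^ (1 - α)) (v' * (1 - α) * V x ^ (1 - α - 1)) x :=
      hv'.rpow_const (Or.inl hVx.ne')
    have hsub : HasDerivAt (fun s => Tc - s) (-1) x := (hasDerivAt_id x).const_sub Tc
    have hd2 : HasDerivAt (fun s => (Tc - s) ^ (-c)) (-1 * (-c) * (Tc - x) ^ (-c - 1)) x :=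
      hsub.rpow_const (Or.inl hP.ne')
    have hd3 : HasDerivAt (fun s => (Tc - s) ^ (1 - c)) (-1 * (1 - c) * (Tc - x) ^ (1 - c - 1)) x :=
      hsub.rpow_const (Or.inl hP.ne')
    have hdF : HasDerivAt F
        ((v' * (1 - α) * V x ^ (1 - α - 1)) * (Tc - x) ^ (-c)
          + V x ^ (1 - α) * (-1 * (-c) * (Tc - x) ^ (-c - 1))
          + q * (1 - α) * (-1 * (1 - c) * (Tc - x) ^ (1 - c - 1) / (c - 1))) x := by
      have h4 := (((hd3.sub_const (Tc ^ (1 - c))).div_const (c - 1)).const_mul (q * (1 - α)))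
      exact (hd1.mul hd2).add h4
    refine ⟨_, hdF, ?_⟩
    -- bound
    have hc1' : (0:ℝ) < c - 1 := by linarith
    have hv'le : v' * (1 - α) * V x ^ (1 - α - 1) ≤
        -c * V x ^ (1 - α) / (Tc - x) - q * (1 - α) := by
      have hpow : (0:ℝ) < V x ^ (1 - α - 1) := Real.rpow_pos_of_pos hVx _
      have := mul_le_mul_of_nonneg_right hle (le_of_lt (by positivity : (0:ℝ) < (1 - α) * V x ^ (1 - α - 1)))
      calc v' * (1 - α) * V x ^ (1 - α - 1) = v' * ((1 - α) * V x ^ (1 - α - 1)) := by ring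
        _ ≤ (-β * V x / (Tc - x) - q * V x ^ α) * ((1 - α) * V x ^ (1 - α - 1)) := this
        _ = -c * (V x * V x ^ (1 - α - 1)) / (Tc - x)
            - q * (1 - α) * (V x ^ α * V x ^ (1 - α - 1)) := by rw [hc]; ring
        _ = -c * V x ^ (1 - α) / (Tc - x) - q * (1 - α) := by
            have e1 : V x * V x ^ (1 - α - 1) = V x ^ (1 - α) := by
              rw [mul_comm, ← Real.rpow_add_one hVx.ne' (1 - α - 1)]
              congr 1; ring
            have e2 : V x ^ α * V x ^ (1 - α - 1) = 1 := by
              rw [← Real.rpow_add hVx]; norm_num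
            rw [e1, e2, mul_one]
      -- done
    have h1 : (v' * (1 - α) * V x ^ (1 - α - 1)) * (Tc - x) ^ (-c) ≤
        (-c * V x ^ (1 - α) / (Tc - x) - q * (1 - α)) * (Tc - x) ^ (-c) :=
      mul_le_mul_of_nonneg_right hv'le (Real.rpow_nonneg hP.le _)
    have hPc : (Tc - x) ^ (-c) / (Tc - x) = (Tc - x) ^ (-c - 1) := by
      rw [Real.rpow_sub_one hP.ne' (-c)]
    have hback : (-c * V x ^ (1 - α) / (Tc - x) - q * (1 - α)) * (Tc - x) ^ (-c)
          + V x ^ (1 - α) * (-1 * (-c) * (Tc - x) ^ (-c - 1))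
          + q * (1 - α) * (-1 * (1 - c) * (Tc - x) ^ (1 - c - 1) / (c - 1)) = 0 := by
      have e1 : -c * V x ^ (1 - α) / (Tc - x) * (Tc - x) ^ (-c)
          = -c * V x ^ (1 - α) * (Tc - x) ^ (-c - 1) := by
        rw [← hPc]; ring
      have e2 : (1 - c - 1 : ℝ) = -c := by ring
      rw [sub_mul, e1, e2]
      field_simp
      ring
    linarith [add_le_add_right (add_le_add_right h1
      (V x ^ (1 - α) * (-1 * (-c) * (Tc - x) ^ (-c - 1))))
      (q * (1 - α) * (-1 * (1 - c) * (Tc - x) ^ (1 - c - 1) / (c - 1)))]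
  have hanti : AntitoneOn F (Set.Icc 0 t) := by
    apply antitoneOn_of_deriv_nonpos (convex_Icc 0 t)
    · intro x hx
      obtain ⟨e, he, _⟩ := key x hx
      exact he.continuousAt.continuousWithinAt
    · intro x hx
      rw [interior_Icc] at hx
      obtain ⟨e, he, _⟩ := key x (Set.mem_Icc_of_Ioo hx)
      exact he.differentiableAt.differentiableWithinAt
    · intro x hx
      rw [interior_Icc] at hx
      obtain ⟨e, he, hle⟩ := key x (Set.mem_Icc_of_Ioo hx)
      rw [he.deriv]; exact hle
  have hFt : F t ≤ F 0 :=
    hanti (Set.left_mem_Icc.2 ht0.le) (Set.right_mem_Icc.2 ht0.le) ht0.le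
  have hPt : 0 < Tc - t := by linarith
  have hF0 : F 0 = V 0 ^ (1 - α) * Tc ^ (-c) := by
    simp [hF]
  rw [hF0] at hFt
  have hmul := mul_le_mul_of_nonneg_right hFt (Real.rpow_pos_of_pos hPt c).le
  have hinv : (Tc - t) ^ (-c) * (Tc - t) ^ c = 1 := by
    rw [← Real.rpow_add hPt]; simp
  calc V t ^ (1 - α)
      = (V t ^ (1 - α) * (Tc - t) ^ (-c)
          + q * (1 - α) * (((Tc - t) ^ (1 - c) - Tc ^ (1 - c)) / (c - 1))
          - q * (1 - α) * (((Tc - t) ^ (1 - c) - Tc ^ (1 - c)) / (c - 1))) * (Tc - t) ^ c := by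
        rw [add_sub_cancel_right, mul_assoc, hinv, mul_one]
    _ ≤ (V 0 ^ (1 - α) * Tc ^ (-c)
          - q * (1 - α) * (((Tc - t) ^ (1 - c) - Tc ^ (1 - c)) / (c - 1))) * (Tc - t) ^ c := by
        apply mul_le_mul_of_nonneg_right _ (Real.rpow_pos_of_pos hPt c).le
        have := hFt
        simp only [hF] at this
        linarith
    _ = (Tc - t) ^ c * (V 0 ^ (1 - α) * Tc ^ (-c)
          - q * (1 - α) * (((Tc - t) ^ (1 - c) - Tc ^ (1 - c)) / (c - 1))) := mul_comm _ _
end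

section
/- Suppose V satisfies the time-barrier dissipation inequality with β(1−α) = 1 and V(0) > 0. Define τ* := T_c·(1 − exp(−V(0)^{1−α}/(q(1−α)·T_c))). Then τ* < T_c, and there exists τ ∈ [0, τ*] with V(τ) = 0; in particular V vanishes no later than τ*, strictly before the predefined deadline T_c. -/
private lemma time_barrier_aux (q β α u A v' : ℝ)
    (hq : 0 < q) (hα0 : 0 < α) (hα1 : α < 1) (hu : 0 < u) (hA : 0 < A)
    (hcond : β * (1 - α) = 1)
    (hbound : v' ≤ -β * u / A - q * u ^ α) :
    ((1 - α) * u ^ (1 - α - 1) * v' * A - u ^ (1 - α) * (-1)) / A ^ 2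
      - q * (1 - α) * (-1 / A) ≤ 0 := by
  set m : ℝ := u ^ (1 - α - 1) with hm_def
  set P : ℝ := u ^ (1 - α) with hP_def
  have hm : 0 < m := Real.rpow_pos_of_pos hu _
  have hP : 0 < P := Real.rpow_pos_of_pos hu _
  have hid1 : m * u = P := by
    rw [hm_def, hP_def, Real.rpow_sub hu, Real.rpow_one,
      div_mul_cancel₀ _ (ne_of_gt hu)]
  have hid2 : m * u ^ α = 1 := by
    rw [hm_def, ← Real.rpow_add hu,
      show (1 - α - 1 + α : ℝ) = 0 by ring, Real.rpow_zero]
  clear_value m P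
  have h1 : (1 - α) * m * A * v' ≤ (1 - α) * m * A * (-β * u / A - q * u ^ α) := by
    apply mul_le_mul_of_nonneg_left hbound
    apply mul_nonneg (mul_nonneg (by linarith) hm.le) hA.le
  have h2 : (1 - α) * m * A * (-β * u / A - q * u ^ α) = -P - q * (1 - α) * A := by
    linear_combination (-(1 - α) * β * m * u) * (mul_inv_cancel₀ hA.ne') + (-(1 - α) * β) * hid1 + (-(1 - α) * q * A) * hid2
      + (-P) * hcond
  rw [h2] at h1
  have heq2 : ((1 - α) * m * v' * A - P * (-1)) / A ^ 2 - q * (1 - α) * (-1 / A)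
      = ((1 - α) * m * A * v' + P + q * (1 - α) * A) / A ^ 2 := by
    field_simp
    ring
  rw [heq2]
  apply div_nonpos_of_nonpos_of_nonneg _ (by positivity)
  linarith

/-- quantitative hitting-time bound for `β(1-α) = 1`.
If `V` satisfies the time-barrier dissipation inequality with `β(1-α) = 1` and
`V(0) > 0`, then, setting `τ* = T_c·(1 - exp(-V(0)^{1-α}/(q(1-α)·T_c)))`, one has
`τ* < T_c` and there exists `τ ∈ [0, τ*]` with `V(τ) = 0`: `V` vanishes no later
than `τ*`, strictly before the predefined deadline `T_c`. -/
theorem time_barrier_hitting_time_bound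
    (Tc q β α : ℝ) (hTc : 0 < Tc) (hq : 0 < q) (hβ : 0 < β)
    (hα : α ∈ Set.Ioo (0 : ℝ) 1)
    (V : ℝ → ℝ)
    (hVcont : ContinuousOn V (Set.Ico 0 Tc))
    (hVnonneg : ∀ s ∈ Set.Ico (0 : ℝ) Tc, 0 ≤ V s)
    (hdiss : ∀ s ∈ Set.Ico (0 : ℝ) Tc, 0 < V s →
      ∃ v' : ℝ, HasDerivAt V v' s ∧ v' ≤ -β * V s / (Tc - s) - q * V s ^ α)
    (hcond : β * (1 - α) = 1)
    (hV0 : 0 < V 0) :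
    Tc * (1 - Real.exp (-(V 0 ^ (1 - α)) / (q * (1 - α) * Tc))) < Tc ∧
      ∃ τ ∈ Set.Icc (0 : ℝ)
          (Tc * (1 - Real.exp (-(V 0 ^ (1 - α)) / (q * (1 - α) * Tc)))),
        V τ = 0 := by
  obtain ⟨hα0, hα1⟩ := hα
  set k : ℝ := q * (1 - α) with hk_def
  have hk : 0 < k := mul_pos hq (by linarith)
  set W0 : ℝ := V 0 ^ (1 - α) with hW0_def
  have hW0 : 0 < W0 := Real.rpow_pos_of_pos hV0 _
  set E : ℝ := Real.exp (-W0 / (k * Tc)) with hE_def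
  have hEpos : 0 < E := Real.exp_pos _
  have hElt1 : E < 1 := by
    apply Real.exp_lt_one_iff.mpr
    apply div_neg_of_neg_of_pos (by linarith) (mul_pos hk hTc)
  set τ : ℝ := Tc * (1 - E) with hτ_def
  have hτnonneg : 0 ≤ τ := by
    apply mul_nonneg hTc.le; linarith
  have hτlt : τ < Tc := by
    have : Tc * (1 - E) < Tc * 1 := by
      apply mul_lt_mul_of_pos_left _ hTc
      linarith
    simpa using this
  have hTcτ : Tc - τ = Tc * E := by rw [hτ_def]; ring
  have hTcτpos : 0 < Tc - τ := by linarith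
  refine ⟨hτlt, ?_⟩
  by_contra hcon
  push_neg at hcon
  have hsub : Set.Icc (0 : ℝ) τ ⊆ Set.Ico 0 Tc := fun t ht =>
    ⟨ht.1, lt_of_le_of_lt ht.2 hτlt⟩
  have hpos : ∀ t ∈ Set.Icc (0 : ℝ) τ, 0 < V t := by
    intro t ht
    rcases lt_or_eq_of_le (hVnonneg t (hsub ht)) with h | h
    · exact h
    · exact absurd h.symm (hcon t ht)
  -- the barrier function
  set g : ℝ → ℝ := fun t => V t ^ (1 - α) / (Tc - t) - k * Real.log (Tc - t)
    with hg_def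
  have hcontTc : ContinuousOn (fun t : ℝ => Tc - t) (Set.Icc 0 τ) :=
    (continuous_const.sub continuous_id).continuousOn
  have hTcne : ∀ t ∈ Set.Icc (0 : ℝ) τ, Tc - t ≠ 0 := by
    intro t ht
    have := lt_of_le_of_lt ht.2 hτlt
    exact ne_of_gt (by linarith)
  have hgcont : ContinuousOn g (Set.Icc 0 τ) := by
    apply ContinuousOn.sub
    · apply ContinuousOn.div
      · exact (hVcont.mono hsub).rpow_const fun t ht => Or.inr (by linarith)
      · exact hcontTc
      · exact hTcne
    · exact continuousOn_const.mul (hcontTc.log hTcne)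
  -- derivative bound on the interior
  have hderiv : ∀ x ∈ Set.Ioo (0 : ℝ) τ,
      ∃ d : ℝ, HasDerivAt g d x ∧ d ≤ 0 := by
    intro x hx
    have hxIcc : x ∈ Set.Icc (0 : ℝ) τ := ⟨hx.1.le, hx.2.le⟩
    have hxIco : x ∈ Set.Ico (0 : ℝ) Tc := hsub hxIcc
    have hVx : 0 < V x := hpos x hxIcc
    have hA : 0 < Tc - x := by
      have := lt_of_le_of_lt hx.2.le hτlt; linarith
    obtain ⟨v', hv', hbound⟩ := hdiss x hxIco hVx
    have hW : HasDerivAt (fun t => V t ^ (1 - α))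
        ((1 - α) * V x ^ (1 - α - 1) * v') x := by
      have := hv'.rpow_const (p := 1 - α) (Or.inl (ne_of_gt hVx))
      convert this using 1
      ring
    have hAd : HasDerivAt (fun t : ℝ => Tc - t) (-1) x := by
      simpa using (hasDerivAt_id x).const_sub Tc
    have hdiv : HasDerivAt (fun t => V t ^ (1 - α) / (Tc - t))
        (((1 - α) * V x ^ (1 - α - 1) * v' * (Tc - x) - V x ^ (1 - α) * (-1))
          / (Tc - x) ^ 2) x :=
      hW.div hAd (ne_of_gt hA)
    have hlog : HasDerivAt (fun t : ℝ => Real.log (Tc - t)) (-1 / (Tc - x)) x :=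
      hAd.log (ne_of_gt hA)
    have hgd : HasDerivAt g
        (((1 - α) * V x ^ (1 - α - 1) * v' * (Tc - x) - V x ^ (1 - α) * (-1))
          / (Tc - x) ^ 2 - k * (-1 / (Tc - x))) x :=
      hdiv.sub (hlog.const_mul k)
    refine ⟨_, hgd, ?_⟩
    rw [hk_def]
    exact time_barrier_aux q β α (V x) (Tc - x) v' hq hα0 hα1 hVx hA hcond hbound
  -- g is antitone on [0, τ]
  have hdiff : ∀ x ∈ interior (Set.Icc (0:ℝ) τ), DifferentiableAt ℝ g x := by
    intro x hx
    rw [interior_Icc] at hx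
    obtain ⟨d, hd, _⟩ := hderiv x hx
    exact hd.differentiableAt
  have hanti : AntitoneOn g (Set.Icc 0 τ) := by
    apply antitoneOn_of_deriv_nonpos (convex_Icc 0 τ) hgcont
    · intro x hx
      exact (hdiff x hx).differentiableWithinAt
    · intro x hx
      rw [interior_Icc] at hx
      obtain ⟨d, hd, hdle⟩ := hderiv x hx
      rw [hd.deriv]
      exact hdle
  have h0mem : (0:ℝ) ∈ Set.Icc (0:ℝ) τ := ⟨le_refl 0, hτnonneg⟩
  have hτmem : τ ∈ Set.Icc (0:ℝ) τ := ⟨hτnonneg, le_refl τ⟩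
  have hgle : g τ ≤ g 0 := hanti h0mem hτmem hτnonneg
  -- compute g 0 and g τ
  have hg0 : g 0 = W0 / Tc - k * Real.log Tc := by
    simp [hg_def, hW0_def]
  have hlogτ : Real.log (Tc - τ) = Real.log Tc + (-W0 / (k * Tc)) := by
    rw [hTcτ, Real.log_mul (ne_of_gt hTc) (ne_of_gt hEpos), hE_def, Real.log_exp]
  have hgτ : g τ = V τ ^ (1 - α) / (Tc - τ) - k * Real.log Tc + W0 / Tc := by
    rw [hg_def]
    simp only
    rw [hlogτ]
    field_simp
    ring
  have hVτ : 0 < V τ ^ (1 - α) := Real.rpow_pos_of_pos (hpos τ hτmem) _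
  have : 0 < V τ ^ (1 - α) / (Tc - τ) := div_pos hVτ hTcτpos
  rw [hg0, hgτ] at hgle
  linarith
end

section
/- Let x : [0, T_c) → ℝ be continuous, and suppose at every t ∈ [0, T_c) with x(t) ≠ 0, x is differentiable at t with x'(t) = −β·x(t)/(T_c − t) − q·|x(t)|^α·sign(x(t)). If β(1−α) ≥ 1, then there exists τ ∈ [0, T_c) such that x(t) = 0 for all t ∈ [τ, T_c); in particular x(t) → 0 as t → T_c from the left, for every initial value x(0) ∈ ℝ. -/
open Set Real Filter

lemma no_pos_sol (Tc q β α : ℝ) (hTc : 0 < Tc) (hq : 0 < q) (hβ : 0 < β)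
    (hα1 : 0 < α) (hα2 : α < 1) (hcond : β * (1 - α) ≥ 1)
    (y : ℝ → ℝ) (hycont : ContinuousOn y (Set.Ico 0 Tc))
    (hypos : ∀ t ∈ Set.Ico (0:ℝ) Tc, 0 < y t)
    (hdyn : ∀ t ∈ Set.Ico (0:ℝ) Tc,
      HasDerivAt y (-β * y t / (Tc - t) - q * y t ^ α) t) : False := by
  set c := q * (1 - α) with hc
  have hcpos : 0 < c := mul_pos hq (by linarith)
  set φ : ℝ → ℝ := fun s => y s ^ (1 - α) * (Tc - s)⁻¹
      + c * (Real.log Tc - Real.log (Tc - s)) with hφ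
  have key : ∀ t ∈ Set.Ico (0:ℝ) Tc,
      HasDerivAt φ ((1 - β * (1 - α)) * y t ^ (1 - α) / (Tc - t)^2) t := by
    intro t ht
    have hu : 0 < Tc - t := sub_pos.mpr ht.2
    have hy := hypos t ht
    have hd2 : HasDerivAt (fun s => Tc - s) (-1) t := by
      simpa using (hasDerivAt_id t).const_sub Tc
    have hd1 := (hdyn t ht).rpow_const (p := 1 - α) (Or.inl hy.ne')
    have hd3 := hd2.inv hu.ne'
    have hd4 := hd1.mul hd3
    have hd5 := (hd2.log hu.ne').const_sub (Real.log Tc)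
    have hd6 := hd4.add (hd5.const_mul c)
    convert hd6 using 1
    case e'_4 => rfl
    case e'_5 => rfl
    case e'_8 => rfl
    have e1 : y t ^ (1 - α - 1) = y t ^ (1 - α) / y t := by
      rw [Real.rpow_sub hy, Real.rpow_one]
    have h2 : y t ^ α * y t ^ (1 - α) = y t := by
      rw [← Real.rpow_add hy]; norm_num
    have hg : y t ^ (1 - α) ≠ 0 := (Real.rpow_pos_of_pos hy _).ne'
    have e2 : y t ^ α = y t / y t ^ (1 - α) := by
      field_simp
      linarith [h2]
    rw [e1, e2]
    have hu' : (Tc - t) ≠ 0 := hu.ne'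
    have hy' : y t ≠ 0 := hy.ne'
    simp only [Pi.inv_apply, hc]
    field_simp
    ring
  have hφcont : ContinuousOn φ (Set.Ico 0 Tc) := by
    apply ContinuousOn.add
    · exact (hycont.rpow_const (fun t ht => Or.inl (hypos t ht).ne')).mul
        ((continuousOn_const.sub continuousOn_id).inv₀
          (fun t ht => (sub_pos.mpr ht.2).ne'))
    · exact continuousOn_const.mul (continuousOn_const.sub
        ((continuousOn_const.sub continuousOn_id).log
          (fun t ht => (sub_pos.mpr ht.2).ne')))
  have hanti : AntitoneOn φ (Set.Ico 0 Tc) := by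
    apply antitoneOn_of_deriv_nonpos (convex_Ico 0 Tc) hφcont
    · intro t ht
      rw [interior_Ico] at ht
      exact (key t (Set.Ioo_subset_Ico_self ht)).differentiableAt.differentiableWithinAt
    · intro t ht
      rw [interior_Ico] at ht
      have ht' := Set.Ioo_subset_Ico_self ht
      rw [(key t ht').deriv]
      apply div_nonpos_of_nonpos_of_nonneg
      · have h1 : (0:ℝ) ≤ y t ^ (1 - α) := (Real.rpow_pos_of_pos (hypos t ht') _).le
        nlinarith
      · positivity
  have hM0 : φ 0 = y 0 ^ (1 - α) / Tc := by
    simp [hφ, sub_zero, div_eq_mul_inv]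
  have hMnn : 0 ≤ φ 0 := by
    rw [hM0]
    exact div_nonneg (Real.rpow_nonneg (hypos 0 ⟨le_refl _, hTc⟩).le _) hTc.le
  set M := φ 0 with hM
  set ε := Tc * Real.exp (-(M / c + 1)) with hε
  have hε1 : 0 < ε := by positivity
  have hε2 : ε < Tc := by
    have h1 : Real.exp (-(M / c + 1)) < 1 := by
      rw [Real.exp_lt_one_iff]
      have : 0 ≤ M / c := div_nonneg hMnn hcpos.le
      linarith
    nlinarith
  set t := Tc - ε with htdef
  have htmem : t ∈ Set.Ico 0 Tc := ⟨by linarith, by linarith⟩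
  have hle : φ t ≤ M := hanti ⟨le_refl _, hTc⟩ htmem htmem.1
  have hTct : Tc - t = ε := by ring
  have hlog : Real.log (Tc - t) = Real.log Tc - (M / c + 1) := by
    rw [hTct, hε, Real.log_mul hTc.ne' (Real.exp_ne_zero _), Real.log_exp]
    ring
  have hφt : M + c ≤ φ t := by
    have h1 : (0:ℝ) ≤ y t ^ (1 - α) * (Tc - t)⁻¹ := by
      have := (Real.rpow_pos_of_pos (hypos t htmem) (1 - α)).le
      have h2 : (0:ℝ) ≤ (Tc - t)⁻¹ := by
        rw [hTct]; positivity
      exact mul_nonneg this h2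
    have h3 : c * (Real.log Tc - Real.log (Tc - t)) = M + c := by
      rw [hlog]
      field_simp
      ring
    calc M + c = 0 + c * (Real.log Tc - Real.log (Tc - t)) := by rw [h3]; ring
    _ ≤ y t ^ (1 - α) * (Tc - t)⁻¹ + c * (Real.log Tc - Real.log (Tc - t)) := by linarith
    _ = φ t := rfl
  linarith


/-- conclusion of the illustrative example.
If `x : [0, T_c) → ℝ` is continuous and satisfies the scalar time-varying
dynamics `x' = -β·x/(T_c - t) - q·|x|^α·sign(x)` at every `t` with `x(t) ≠ 0`,
and `β(1-α) ≥ 1`, then there exists `τ ∈ [0, T_c)` such that `x(t) = 0` for all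
`t ∈ [τ, T_c)`; in particular `x(t) → 0` as `t → T_c⁻`, for every initial
value `x(0)`. -/
theorem time_barrier_example_predefined_time_stable
    (Tc q β α : ℝ) (hTc : 0 < Tc) (hq : 0 < q) (hβ : 0 < β)
    (hα : α ∈ Set.Ioo (0 : ℝ) 1)
    (x : ℝ → ℝ)
    (hxcont : ContinuousOn x (Set.Ico 0 Tc))
    (hdyn : ∀ t ∈ Set.Ico (0 : ℝ) Tc, x t ≠ 0 →
      HasDerivAt x (-β * x t / (Tc - t) - q * |x t| ^ α * Real.sign (x t)) t)
    (hcond : β * (1 - α) ≥ 1) :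
    (∃ τ ∈ Set.Ico (0 : ℝ) Tc, ∀ t ∈ Set.Ico τ Tc, x t = 0) ∧
      Filter.Tendsto x (nhdsWithin Tc (Set.Iio Tc)) (nhds 0) := by
  obtain ⟨hα1, hα2⟩ := hα
  -- Step 1: there is a zero in [0, Tc)
  have hzero : ∃ t₀ ∈ Set.Ico (0:ℝ) Tc, x t₀ = 0 := by
    by_contra hcon
    push_neg at hcon
    have h0 : (0:ℝ) ∈ Set.Ico 0 Tc := ⟨le_refl _, hTc⟩
    rcases Ne.lt_or_gt (hcon 0 h0) with hneg | hpos
    · -- x is everywhere negative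
      have hall : ∀ t ∈ Set.Ico (0:ℝ) Tc, x t < 0 := by
        intro t ht
        rcases Ne.lt_or_gt (hcon t ht) with h' | h'
        · exact h'
        · exfalso
          have hsub : Set.Icc (0:ℝ) t ⊆ Set.Ico 0 Tc := fun u hu =>
            ⟨hu.1, lt_of_le_of_lt hu.2 ht.2⟩
          obtain ⟨s, hs, hxs⟩ := intermediate_value_Icc ht.1 (hxcont.mono hsub)
            (Set.mem_Icc.mpr ⟨hneg.le, h'.le⟩)
          exact hcon s (hsub hs) hxs
      apply no_pos_sol Tc q β α hTc hq hβ hα1 hα2 hcond (fun s => -x s)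
        hxcont.neg (fun t ht => by simpa using hall t ht)
      intro t ht
      have hx := hall t ht
      have hd := (hdyn t ht hx.ne).neg
      convert hd using 1
      case e'_4 => rfl
      case e'_5 => rfl
      case e'_8 => rfl
      rw [Real.sign_of_neg hx, abs_of_neg hx]
      ring
    · -- x is everywhere positive
      have hall : ∀ t ∈ Set.Ico (0:ℝ) Tc, 0 < x t := by
        intro t ht
        rcases Ne.lt_or_gt (hcon t ht) with h' | h'
        · exfalso
          have hsub : Set.Icc (0:ℝ) t ⊆ Set.Ico 0 Tc := fun u hu =>
            ⟨hu.1, lt_of_le_of_lt hu.2 ht.2⟩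
          obtain ⟨s, hs, hxs⟩ := intermediate_value_Icc' ht.1 (hxcont.mono hsub)
            (Set.mem_Icc.mpr ⟨h'.le, hpos.le⟩)
          exact hcon s (hsub hs) hxs
        · exact h'
      apply no_pos_sol Tc q β α hTc hq hβ hα1 hα2 hcond x hxcont hall
      intro t ht
      have hx := hall t ht
      have hd := hdyn t ht hx.ne'
      convert hd using 1
      rw [Real.sign_of_pos hx, abs_of_pos hx]
      ring
  obtain ⟨t₀, ht₀, hx₀⟩ := hzero
  -- Step 2: x stays zero on [t₀, Tc)
  have hstay : ∀ t ∈ Set.Ico t₀ Tc, x t = 0 := by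
    intro t₁ ht₁
    by_contra hne
    have ht01 : t₀ < t₁ := lt_of_le_of_ne ht₁.1 (by rintro rfl; exact hne hx₀)
    have hIccsub : Set.Icc t₀ t₁ ⊆ Set.Ico 0 Tc := fun s hs =>
      ⟨le_trans ht₀.1 hs.1, lt_of_le_of_lt hs.2 ht₁.2⟩
    have hc : ContinuousOn x (Set.Icc t₀ t₁) := hxcont.mono hIccsub
    set S := Set.Icc t₀ t₁ ∩ x ⁻¹' {0} with hSdef
    have hSclosed : IsClosed S := hc.preimage_isClosed_of_isClosed isClosed_Icc isClosed_singleton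
    have hScomp : IsCompact S := isCompact_Icc.of_isClosed_subset hSclosed Set.inter_subset_left
    have hSne : S.Nonempty := ⟨t₀, ⟨le_refl _, ht01.le⟩, hx₀⟩
    set s := sSup S with hs
    have hsS : s ∈ S := hScomp.sSup_mem hSne
    have hxs : x s = 0 := hsS.2
    have hst₁ : s < t₁ := lt_of_le_of_ne hsS.1.2 (fun h => hne (h ▸ hxs))
    have hnz : ∀ u ∈ Set.Ioc s t₁, x u ≠ 0 := by
      intro u hu hxu
      have huS : u ∈ S := ⟨⟨le_trans hsS.1.1 hu.1.le, hu.2⟩, hxu⟩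
      exact absurd (le_csSup hScomp.bddAbove huS) (not_le.mpr hu.1)
    have hsub2 : Set.Icc s t₁ ⊆ Set.Ico 0 Tc := fun u hu =>
      hIccsub ⟨le_trans hsS.1.1 hu.1, hu.2⟩
    have hc2 : ContinuousOn x (Set.Icc s t₁) := hxcont.mono hsub2
    rcases Ne.lt_or_gt hne with hneg | hpos
    · -- x t₁ < 0 : x strictly increasing on [s, t₁], so x t₁ > x s = 0, contradiction
      have hallneg : ∀ u ∈ Set.Ioc s t₁, x u < 0 := by
        intro u hu
        rcases (hnz u hu).lt_or_gt with h' | h'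
        · exact h'
        · exfalso
          have hsub3 : Set.Icc u t₁ ⊆ Set.Icc s t₁ := Set.Icc_subset_Icc hu.1.le (le_refl _)
          obtain ⟨v, hv, hxv⟩ := intermediate_value_Icc' hu.2 (hc2.mono hsub3)
            (Set.mem_Icc.mpr ⟨hneg.le, h'.le⟩)
          exact hnz v ⟨lt_of_lt_of_le hu.1 hv.1, hv.2⟩ hxv
      have hmono : StrictMonoOn x (Set.Icc s t₁) := by
        apply strictMonoOn_of_deriv_pos (convex_Icc s t₁) hc2
        intro u hu
        rw [interior_Icc] at hu
        have hu' : u ∈ Set.Ioc s t₁ := ⟨hu.1, hu.2.le⟩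
        have hxu := hallneg u hu'
        have humem : u ∈ Set.Ico 0 Tc := hsub2 ⟨hu.1.le, hu.2.le⟩
        rw [(hdyn u humem hxu.ne).deriv]
        rw [Real.sign_of_neg hxu, abs_of_neg hxu]
        have h1 : 0 < Tc - u := sub_pos.mpr humem.2
        have h2 : 0 < (-x u) ^ α := Real.rpow_pos_of_pos (by linarith) _
        have h3 : 0 < -β * x u / (Tc - u) := div_pos (by nlinarith) h1
        nlinarith [mul_pos hq h2]
      have := hmono (Set.mem_Icc.mpr ⟨le_refl _, hst₁.le⟩)
        (Set.mem_Icc.mpr ⟨hst₁.le, le_refl _⟩) hst₁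
      rw [hxs] at this
      linarith
    · -- x t₁ > 0 : x strictly decreasing on [s, t₁], so x t₁ < x s = 0, contradiction
      have hallpos : ∀ u ∈ Set.Ioc s t₁, 0 < x u := by
        intro u hu
        rcases (hnz u hu).lt_or_gt with h' | h'
        · exfalso
          have hsub3 : Set.Icc u t₁ ⊆ Set.Icc s t₁ := Set.Icc_subset_Icc hu.1.le (le_refl _)
          obtain ⟨v, hv, hxv⟩ := intermediate_value_Icc hu.2 (hc2.mono hsub3)
            (Set.mem_Icc.mpr ⟨h'.le, hpos.le⟩)
          exact hnz v ⟨lt_of_lt_of_le hu.1 hv.1, hv.2⟩ hxv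
        · exact h'
      have hmono : StrictAntiOn x (Set.Icc s t₁) := by
        apply strictAntiOn_of_deriv_neg (convex_Icc s t₁) hc2
        intro u hu
        rw [interior_Icc] at hu
        have hu' : u ∈ Set.Ioc s t₁ := ⟨hu.1, hu.2.le⟩
        have hxu := hallpos u hu'
        have humem : u ∈ Set.Ico 0 Tc := hsub2 ⟨hu.1.le, hu.2.le⟩
        rw [(hdyn u humem hxu.ne').deriv]
        rw [Real.sign_of_pos hxu, abs_of_pos hxu]
        have h1 : 0 < Tc - u := sub_pos.mpr humem.2
        have h2 : 0 < (x u) ^ α := Real.rpow_pos_of_pos hxu _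
        have h3 : 0 < β * x u / (Tc - u) := div_pos (by nlinarith) h1
        have h4 : -β * x u / (Tc - u) = -(β * x u / (Tc - u)) := by ring
        nlinarith [mul_pos hq h2]
      have := hmono (Set.mem_Icc.mpr ⟨le_refl _, hst₁.le⟩)
        (Set.mem_Icc.mpr ⟨hst₁.le, le_refl _⟩) hst₁
      rw [hxs] at this
      linarith
  refine ⟨⟨t₀, ht₀, hstay⟩, ?_⟩
  have hev : ∀ᶠ t in nhdsWithin Tc (Set.Iio Tc), x t = 0 := by
    filter_upwards [Ioo_mem_nhdsLT_of_mem (Set.mem_Ioc.mpr ⟨ht₀.2, le_refl Tc⟩)] with t ht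
    exact hstay t ⟨ht.1.le, ht.2⟩
  exact Filter.Tendsto.congr' (by filter_upwards [hev] with t h; exact h.symm)
    tendsto_const_nhds
end
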